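/- arXiv:2604.18498 — 10 statements merged into one kernel-verified Lean document; each statement's English description precedes it below -/
import Mathlib

section
/- Let D be a squarefree integer, p an odd prime, and let c, k, ℓ be positive integers with gcd(c·k, p) = 1 and c·k < p^ℓ. Set N = c·k·p^ℓ − 1, assume N is odd and that the Jacobi symbol (D/N) = −1. Suppose w ∈ ℤ[√D] satisfies N(w) ≡ 1 (mod N) and w^{(N+1)/p} ≢ 1 (mod N) (note (N+1)/p = c·k·p^{ℓ−1}). Then N is prime if and only if Φ_p(w^{(N+1)/p}) ≡ 0 (mod N). -/
/-!
Put `s = c·k·p^(ℓ-1)`, so that `N + 1 = s·p` and `Φ_p(x)·(x - 1) = x^p - 1`.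

If `N` is prime, `D` is a non-residue modulo `N`, so `N` stays prime in `ℤ[√D]` and the
Frobenius `z ↦ z^N` acts as conjugation modulo `N`. Hence `w^(N+1) ≡ N(w) ≡ 1`, and since
`N ∤ w^s - 1`, primality of `N` forces `N ∣ Φ_p(w^s)`.

Conversely, let `q` be a prime factor of `N`. In `(ℤ[√D]/q)ˣ` the class of `w^(c·k)` is killed by
`p^ℓ` but not by `p^(ℓ-1)`, since otherwise `q` would divide `Φ_p(1) = p`; so its order is `p^ℓ`.
As `w^(q²) ≡ w`, this gives `q ≡ ±1 (mod p^ℓ)`. If `N` were composite, its least prime factor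
would be at most `√N < p^ℓ` (because `c·k < p^ℓ`), leaving only `q = p^ℓ - 1`, which is even.
-/

open Polynomial

namespace Polynomial

variable {R : Type*} [CommRing R] {p : ℕ} [Fact p.Prime]

theorem aeval_cyclotomic_prime_mul_sub_one (x : R) :
    aeval x (cyclotomic p ℤ) * (x - 1) = x ^ p - 1 := by
  simpa using congrArg (aeval x) (cyclotomic_prime_mul_X_sub_one ℤ p)

theorem sub_one_dvd_aeval_cyclotomic_prime_sub (x : R) : x - 1 ∣ aeval x (cyclotomic p ℤ) - p := by
  simpa [aeval_def, eval₂_eq_eval_map] using sub_dvd_eval_sub x 1 (cyclotomic p R)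

end Polynomial

namespace Zsqrtd

variable {D : ℤ}

theorem natCast_dvd_intCast (n : ℕ) (a : ℤ) : (n : ℤ√D) ∣ a ↔ (n : ℤ) ∣ a := by
  rw [← intCast_dvd_intCast, Int.cast_natCast]

theorem natCast_dvd_natCast (m n : ℕ) : (m : ℤ√D) ∣ n ↔ m ∣ n := by
  rw [← Int.cast_natCast (R := ℤ√D) n, natCast_dvd_intCast, Int.natCast_dvd_natCast]

theorem not_isUnit_natCast {n : ℕ} (hn : n ≠ 1) : ¬IsUnit (n : ℤ√D) := by
  rw [isUnit_iff_dvd_one, ← Nat.cast_one, natCast_dvd_natCast, Nat.dvd_one]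
  exact hn

theorem natCast_dvd_of_dvd_norm {q : ℕ} [Fact q.Prime] (hD : legendreSym q D = -1) {z : ℤ√D}
    (h : (q : ℤ) ∣ z.norm) : (q : ℤ√D) ∣ z := by
  rw [← Int.cast_natCast, intCast_dvd, ← ZMod.intCast_zmod_eq_zero_iff_dvd,
    ← ZMod.intCast_zmod_eq_zero_iff_dvd]
  rw [← ZMod.intCast_zmod_eq_zero_iff_dvd, norm_def] at h
  push_cast at h
  have him : (z.im : ZMod q) = 0 := by
    by_contra him
    refine (legendreSym.eq_neg_one_iff q).1 hD ⟨z.re / z.im, ?_⟩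
    field_simp
    linear_combination -h
  refine ⟨?_, him⟩
  rw [him] at h
  simpa using h

theorem prime_natCast {q : ℕ} [hq : Fact q.Prime] (hD : legendreSym q D = -1) :
    Prime (q : ℤ√D) := by
  refine ⟨Nat.cast_ne_zero.2 hq.out.ne_zero, not_isUnit_natCast hq.out.ne_one, fun a b hab => ?_⟩
  have hnorm : (q : ℤ) ∣ a.norm * b.norm := by
    rw [← norm_mul, ← natCast_dvd_intCast (D := D), norm_eq_mul_conj]
    exact dvd_mul_of_dvd_left hab _
  exact (Int.Prime.dvd_mul' hq.out hnorm).imp (natCast_dvd_of_dvd_norm hD)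
    (natCast_dvd_of_dvd_norm hD)

section Frobenius

variable {R : Type*} [CommRing R] {q : ℕ} [Fact q.Prime] [CharP R q]

theorem intCast_pow_char (a : ℤ) : (a : R) ^ q = a := by
  rw [← map_intCast (ZMod.castHom (dvd_refl q) R), ← map_pow, ZMod.pow_card]

theorem intCast_pow_div_two_char (a : ℤ) : (a : R) ^ (q / 2) = (legendreSym q a : R) := by
  rw [← map_intCast (ZMod.castHom (dvd_refl q) R), ← map_pow, ← legendreSym.eq_pow, map_intCast]

theorem map_pow_char (hq2 : Odd q) (φ : ℤ√D →+* R) (z : ℤ√D) :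
    φ z ^ q = φ ⟨z.re, legendreSym q D * z.im⟩ := by
  obtain ⟨m, hm⟩ := hq2
  have hsqrtd : φ sqrtd ^ q = (legendreSym q D : R) * φ sqrtd := by
    rw [← intCast_pow_div_two_char, hm, show (2 * m + 1) / 2 = m by omega, pow_succ, pow_mul, sq,
      ← map_mul, dmuld, map_intCast]
  conv_lhs => rw [show z = ⟨z.re, z.im⟩ from rfl]
  rw [decompose, decompose]
  simp only [map_add, map_mul, map_intCast, add_pow_char, mul_pow, intCast_pow_char, hsqrtd]
  push_cast
  ring

theorem map_pow_char_eq_star (hq2 : Odd q) (hD : legendreSym q D = -1) (φ : ℤ√D →+* R)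
    (z : ℤ√D) : φ z ^ q = φ (star z) := by
  rw [map_pow_char hq2, hD]
  congr 1
  ext <;> simp

theorem map_pow_char_sq (hq2 : Odd q) (hD : ¬(q : ℤ) ∣ D) (φ : ℤ√D →+* R) (z : ℤ√D) :
    φ z ^ q ^ 2 = φ z := by
  rw [← ZMod.intCast_zmod_eq_zero_iff_dvd] at hD
  rw [sq, pow_mul, map_pow_char hq2, map_pow_char hq2, ← mul_assoc, ← sq, legendreSym.sq_one q hD,
    one_mul]

end Frobenius

theorem mk_mul_mk_star {n : ℕ} {w : ℤ√D} (hw : (n : ℤ) ∣ w.norm - 1) :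
    Ideal.Quotient.mk (Ideal.span {(n : ℤ√D)}) w * Ideal.Quotient.mk _ (star w) = 1 := by
  rw [← map_mul, ← norm_eq_mul_conj, ← map_one (Ideal.Quotient.mk _), ← sub_eq_zero, ← map_sub,
    Ideal.Quotient.eq_zero_iff_dvd, ← Int.cast_one, ← Int.cast_sub, natCast_dvd_intCast]
  exact hw

variable {q : ℕ} [hq : Fact q.Prime]

theorem natCast_dvd_pow_succ_sub_one (hq2 : Odd q) (hD : legendreSym q D = -1) {w : ℤ√D}
    (hw : (q : ℤ) ∣ w.norm - 1) : (q : ℤ√D) ∣ w ^ (q + 1) - 1 := by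
  have := CharP.quotient (ℤ√D) q (not_isUnit_natCast hq.out.ne_one)
  rw [← Ideal.Quotient.eq_zero_iff_dvd, map_sub, map_pow, map_one, pow_succ,
    map_pow_char_eq_star hq2 hD, mul_comm, mk_mul_mk_star hw, sub_self]

theorem pow_dvd_sq_sub_one {p : ℕ} [Fact p.Prime] (hq2 : Odd q) (hD : ¬(q : ℤ) ∣ D) {w : ℤ√D}
    (hw : (q : ℤ) ∣ w.norm - 1) {m ℓ : ℕ} (h1 : (q : ℤ√D) ∣ w ^ (m * p ^ (ℓ + 1)) - 1)
    (h2 : ¬(q : ℤ√D) ∣ w ^ (m * p ^ ℓ) - 1) : p ^ (ℓ + 1) ∣ q ^ 2 - 1 := by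
  have := CharP.quotient (ℤ√D) q (not_isUnit_natCast hq.out.ne_one)
  set φ := Ideal.Quotient.mk (Ideal.span {(q : ℤ√D)})
  let u := Units.mkOfMulEqOne (φ w) (φ (star w)) (mk_mul_mk_star hw)
  have hu : ∀ n, u ^ n = 1 ↔ (q : ℤ√D) ∣ w ^ n - 1 := fun n => by
    rw [Units.ext_iff, Units.val_pow_eq_pow_val, Units.val_mkOfMulEqOne, Units.val_one,
      ← Ideal.Quotient.eq_zero_iff_dvd, map_sub, map_pow, map_one, sub_eq_zero]
  have hfrob : u ^ q ^ 2 = u := Units.ext (by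
    rw [Units.val_pow_eq_pow_val, Units.val_mkOfMulEqOne, map_pow_char_sq hq2 hD])
  have hord : orderOf (u ^ m) = p ^ (ℓ + 1) :=
    orderOf_eq_prime_pow (by rwa [← pow_mul, hu]) (by rwa [← pow_mul, hu])
  rw [← hord]
  refine orderOf_dvd_of_pow_eq_one ?_
  rw [← pow_mul, mul_comm, pow_mul, pow_sub u (Nat.one_le_pow _ _ hq.out.pos), hfrob, pow_one,
    mul_inv_cancel, one_pow]

theorem natCast_dvd_aeval_cyclotomic {p : ℕ} [Fact p.Prime] (hq2 : Odd q)
    (hD : legendreSym q D = -1) {w : ℤ√D} (hw : (q : ℤ) ∣ w.norm - 1) {s : ℕ} (hs : q + 1 = s * p)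
    (hws : ¬(q : ℤ√D) ∣ w ^ s - 1) : (q : ℤ√D) ∣ aeval (w ^ s) (cyclotomic p ℤ) := by
  have h := natCast_dvd_pow_succ_sub_one hq2 hD hw
  rw [hs, pow_mul, ← aeval_cyclotomic_prime_mul_sub_one] at h
  exact ((prime_natCast hD).dvd_or_dvd h).resolve_right hws

theorem pow_dvd_sq_sub_one_of_dvd_aeval_cyclotomic {p : ℕ} [hp : Fact p.Prime] (hq2 : Odd q)
    (hqp : q ≠ p) (hD : ¬(q : ℤ) ∣ D) {w : ℤ√D} (hw : (q : ℤ) ∣ w.norm - 1) {m ℓ : ℕ}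
    (hΦ : (q : ℤ√D) ∣ aeval (w ^ (m * p ^ ℓ)) (cyclotomic p ℤ)) : p ^ (ℓ + 1) ∣ q ^ 2 - 1 := by
  refine pow_dvd_sq_sub_one (m := m) hq2 hD hw ?_ fun h => hqp ?_
  · rw [pow_succ, ← mul_assoc, pow_mul, ← aeval_cyclotomic_prime_mul_sub_one]
    exact dvd_mul_of_dvd_left hΦ _
  · have hqp : (q : ℤ√D) ∣ p := by
      simpa using dvd_sub hΦ (h.trans (sub_one_dvd_aeval_cyclotomic_prime_sub (p := p) _))
    exact (Nat.prime_dvd_prime_iff_eq hq.out hp.out).1 ((natCast_dvd_natCast q p).1 hqp)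

end Zsqrtd

theorem Nat.not_pow_dvd_sq_sub_one {p q ℓ : ℕ} (hp : p.Prime) (hpodd : Odd p) (hq : Odd q)
    (hq1 : 1 < q) (hlt : q < p ^ ℓ) : ¬p ^ ℓ ∣ q ^ 2 - 1 := by
  intro h
  rw [← one_pow 2, Nat.sq_sub_sq] at h
  have hp3 : 3 ≤ p := by have := Nat.odd_iff.1 hpodd; have := hp.two_le; omega
  have hcoprime : ¬p ∣ q + 1 ∨ ¬p ∣ q - 1 := by
    by_contra! hboth
    have h2 : p ∣ 2 := by
      simpa [show q + 1 - (q - 1) = 2 by omega] using Nat.dvd_sub hboth.1 hboth.2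
    have := Nat.le_of_dvd two_pos h2
    omega
  rcases hcoprime with hnd | hnd
  · have := Nat.le_of_dvd (by omega) ((Nat.prime_iff.1 hp).pow_dvd_of_dvd_mul_left ℓ hnd h)
    omega
  · have := Nat.le_of_dvd (by omega) ((Nat.prime_iff.1 hp).pow_dvd_of_dvd_mul_right ℓ hnd h)
    obtain ⟨a, ha⟩ := hq
    obtain ⟨b, hb⟩ := hpodd.pow (n := ℓ)
    omega

theorem not_dvd_of_jacobiSym_eq_neg_one {a : ℤ} {b q : ℕ} (h : jacobiSym a b = -1)
    (hq : q.Prime) (hqb : q ∣ b) : ¬(q : ℤ) ∣ a := by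
  have hb : b ≠ 0 := by rintro rfl; simp at h
  have hab : IsCoprime a b := Int.isCoprime_iff_gcd_eq_one.2 <| by
    by_contra hne
    simp [jacobiSym.eq_zero_iff.2 ⟨hb, hne⟩] at h
  exact fun hqa => (Nat.prime_iff_prime_int.1 hq).not_isUnit
    (hab.isUnit_of_dvd' hqa (Int.natCast_dvd_natCast.2 hqb))

theorem Nat.prime_of_forall_pow_dvd_sq_sub_one {p ℓ m N : ℕ} (hp : p.Prime) (hpodd : Odd p)
    (hNodd : Odd N) (hN : N + 1 = m * p ^ ℓ) (hm : m < p ^ ℓ)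
    (h : ∀ q, q.Prime → q ∣ N → p ^ ℓ ∣ q ^ 2 - 1) : N.Prime := by
  have hP : 3 ≤ p ^ ℓ := by
    rcases ℓ with _ | ℓ
    · simp_all
    · have := Nat.odd_iff.1 hpodd
      have := hp.two_le
      have := Nat.le_self_pow (n := ℓ + 1) (by omega) p
      omega
  have hm0 : 0 < m := Nat.pos_of_ne_zero (by rintro rfl; simp at hN)
  have hNlt : N < p ^ ℓ * p ^ ℓ := by
    have := Nat.mul_lt_mul_of_pos_right hm (by omega : 0 < p ^ ℓ)
    omega
  have hN1 : 1 < N := by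
    have := Nat.le_mul_of_pos_left (p ^ ℓ) hm0
    omega
  by_contra hNp
  have hq := Nat.minFac_prime hN1.ne'
  have hqN := Nat.minFac_dvd N
  have hqsq := Nat.minFac_sq_le_self (by omega) hNp
  rw [sq] at hqsq
  have hqlt : N.minFac < p ^ ℓ := Nat.mul_self_lt_mul_self_iff.1 (hqsq.trans_lt hNlt)
  exact Nat.not_pow_dvd_sq_sub_one hp hpodd (hNodd.of_dvd_nat hqN) hq.one_lt hqlt (h _ hq hqN)

theorem stmt_0_general (D : ℤ)
    (p : ℕ) (hp : p.Prime) (hpodd : Odd p)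
    (c k ℓ : ℕ) (hlt : c * k < p ^ ℓ)
    (N : ℕ) (hN : N = c * k * p ^ ℓ - 1) (hNodd : Odd N)
    (hJ : jacobiSym D N = -1)
    (w : Zsqrtd D)
    (hnorm : (N : ℤ) ∣ (w.norm - 1))
    (hw : ¬ (N : Zsqrtd D) ∣ (w ^ (c * k * p ^ (ℓ - 1)) - 1)) :
    N.Prime ↔
      (N : Zsqrtd D) ∣
        (Polynomial.aeval (w ^ (c * k * p ^ (ℓ - 1))) (Polynomial.cyclotomic p ℤ)) := by
  have := Fact.mk hp
  have hN1 : N + 1 = c * k * p ^ ℓ := by obtain ⟨a, ha⟩ := hNodd; omega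
  rcases ℓ with _ | ℓ
  · rw [pow_zero, Nat.lt_one_iff] at hlt
    simp [hlt] at hN1
  rw [Nat.add_sub_cancel] at hw ⊢
  have hpN : ¬p ∣ N := fun h => hp.one_lt.ne' <| Nat.dvd_one.1 <| (Nat.dvd_add_right h).1 <|
    hN1 ▸ dvd_mul_of_dvd_right (dvd_pow_self p ℓ.succ_ne_zero) _
  constructor
  · intro hNp
    have := Fact.mk hNp
    have hleg : legendreSym N D = -1 := by rwa [jacobiSym.legendreSym.to_jacobiSym]
    exact Zsqrtd.natCast_dvd_aeval_cyclotomic hNodd hleg hnorm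
      (by rw [hN1, pow_succ]; ring) hw
  · intro hΦ
    refine Nat.prime_of_forall_pow_dvd_sq_sub_one hp hpodd hNodd hN1 hlt fun q hq hqN => ?_
    have := Fact.mk hq
    exact Zsqrtd.pow_dvd_sq_sub_one_of_dvd_aeval_cyclotomic (hNodd.of_dvd_nat hqN)
      (by rintro rfl; exact hpN hqN) (not_dvd_of_jacobiSym_eq_neg_one hJ hq hqN)
      ((Int.natCast_dvd_natCast.2 hqN).trans hnorm)
      (((Zsqrtd.natCast_dvd_natCast q N).2 hqN).trans hΦ)

/-- Theorem 1.1: primality criterion for `N = c·k·p^ℓ − 1` via the `p`-th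
cyclotomic polynomial evaluated in `ℤ[√D]`. -/
theorem stmt_0 (D : ℤ) (hD : Squarefree D)
    (p : ℕ) (hp : p.Prime) (hpodd : Odd p)
    (c k ℓ : ℕ) (hc : 0 < c) (hk : 0 < k) (hℓ : 0 < ℓ)
    (hgcd : Nat.gcd (c * k) p = 1) (hlt : c * k < p ^ ℓ)
    (N : ℕ) (hN : N = c * k * p ^ ℓ - 1) (hNodd : Odd N)
    (hJ : jacobiSym D N = -1)
    (w : Zsqrtd D)
    (hnorm : (N : ℤ) ∣ (w.norm - 1))
    (hw : ¬ (N : Zsqrtd D) ∣ (w ^ (c * k * p ^ (ℓ - 1)) - 1)) :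
    N.Prime ↔
      (N : Zsqrtd D) ∣
        (Polynomial.aeval (w ^ (c * k * p ^ (ℓ - 1))) (Polynomial.cyclotomic p ℤ)) :=
  stmt_0_general D p hp hpodd c k ℓ hlt N hN hNodd hJ w hnorm hw
end

section
/- Let D be a squarefree integer, p an odd prime, and let c, k, ℓ be positive integers with gcd(c·k, p) = 1. Set N = c·k·p^ℓ − 1, assume N is odd and that the Jacobi symbol (D/N) = −1. Let w ∈ ℤ[√D] satisfy N(w) ≡ 1 (mod N). Suppose there exists an integer j with 1 ≤ j ≤ ℓ such that (i) Φ_p(w^{c·k·p^{j−1}}) ≡ 0 (mod N), and (ii) c·k·p^ℓ ≤ p^{2j} (equivalently, 2j ≥ log_p(c·k) + ℓ). Then N is prime. -/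
/-!
Let `r` be the least prime factor of `N`; it is odd, prime to `p` (as `p ∣ N + 1`) and prime to
`D` (as `(D/N) = -1`). Map `ℤ[√D]` to a field of characteristic `r`. There the Frobenius sends
the image of `w` to itself or to its conjugate `w⁻¹` according as `(D/r) = 1` or `-1`, so its
order divides `r - 1` or `r + 1`. Since `w ^ (c k p^(j-1))` is a root of `Φ_p`, it has order
exactly `p`, which forces `p ^ j` to divide the order of `w`; as `r` and `p` are odd this gives
`2 p^j ≤ r + 1`. If `N` were composite, `r² ≤ N < p^(2j) ≤ ((r + 1) / 2)²`, which is absurd.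
-/

open Polynomial

section CharP

variable {K : Type*} [CommRing K] {q : ℕ} [Fact q.Prime] [CharP K q]

theorem intCast_pow_char (a : ℤ) : (a : K) ^ q = a := by
  rw [← map_intCast (ZMod.castHom (dvd_refl q) K), ← map_pow, ZMod.pow_card]

theorem intCast_pow_div_two_eq_legendreSym (a : ℤ) :
    (a : K) ^ (q / 2) = (legendreSym q a : K) := by
  rw [← map_intCast (ZMod.castHom (dvd_refl q) K), ← map_pow, ← legendreSym.eq_pow,
    map_intCast]

end CharP

theorem orderOf_eq_of_aeval_cyclotomic_eq_zero {K : Type*} [CommRing K] [IsDomain K] {n : ℕ}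
    [NeZero (n : K)] {x : K} (hx : aeval x (cyclotomic n ℤ) = 0) : orderOf x = n := by
  refine ((isRoot_cyclotomic_iff (R := K)).mp ?_).eq_orderOf.symm
  rw [IsRoot, ← map_cyclotomic_int, eval_map]
  exact hx

theorem pow_succ_dvd_orderOf_of_orderOf_pow_eq_prime {G : Type*} [Monoid G] {x : G}
    {p e i : ℕ} (hp : p.Prime) (hx : orderOf (x ^ e) = p) (he : p ^ i ∣ e) :
    p ^ (i + 1) ∣ orderOf x := by
  have he0 : e ≠ 0 := by
    rintro rfl
    simp [hp.ne_one.symm] at hx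
  have hord : orderOf x = p * (orderOf x).gcd e := by
    rw [orderOf_pow' x he0] at hx
    rw [← hx, Nat.div_mul_cancel (Nat.gcd_dvd_left _ _)]
  have key : ∀ k ≤ i + 1, p ^ k ∣ orderOf x := by
    intro k hk
    induction k with
    | zero => exact one_dvd _
    | succ k ih =>
      rw [hord, pow_succ']
      exact Nat.mul_dvd_mul_left p
        (Nat.dvd_gcd (ih (by omega)) ((pow_dvd_pow p (by omega)).trans he))
  exact key _ le_rfl

theorem Nat.two_mul_le_add_one_of_dvd_sub_one_or_dvd_add_one {r P : ℕ} (hr : Odd r)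
    (hP : Odd P) (hr1 : r ≠ 1) (h : P ∣ r - 1 ∨ P ∣ r + 1) : 2 * P ≤ r + 1 := by
  have hcop : Nat.Coprime 2 P := Nat.coprime_two_left.mpr hP
  obtain ⟨t, rfl⟩ := hr
  rcases h with h | h
  · have := Nat.le_of_dvd (by omega) (hcop.mul_dvd_of_dvd_of_dvd ⟨t, by omega⟩ h)
    omega
  · exact Nat.le_of_dvd (by omega) (hcop.mul_dvd_of_dvd_of_dvd ⟨t + 1, by omega⟩ h)

namespace Zsqrtd

theorem exists_field_charP_ringHom (d : ℤ) {q : ℕ} (hq : q.Prime) :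
    ∃ (K : Type) (_ : Field K) (_ : CharP K q), Nonempty (ℤ√d →+* K) := by
  have hne : Ideal.span {(q : ℤ√d)} ≠ ⊤ := by
    rw [Ne, Ideal.span_singleton_eq_top, isUnit_iff_dvd_one, ← Int.cast_natCast,
      ← Int.cast_one, intCast_dvd_intCast, Int.natCast_dvd_ofNat]
    exact hq.not_dvd_one
  obtain ⟨M, hM, hle⟩ := Ideal.exists_le_maximal _ hne
  let := Ideal.Quotient.field M
  refine ⟨ℤ√d ⧸ M, inferInstance, ?_, ⟨Ideal.Quotient.mk M⟩⟩
  rw [CharP.charP_iff_prime_eq_zero hq, ← map_natCast (Ideal.Quotient.mk M),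
    Ideal.Quotient.eq_zero_iff_mem]
  exact hle (Ideal.mem_span_singleton_self _)

section CharP

variable {d : ℤ} {K : Type*} [CommRing K] {q : ℕ} [Fact q.Prime] [CharP K q]

theorem map_eq_re_add_sqrtd_mul_im (f : ℤ√d →+* K) (w : ℤ√d) :
    f w = w.re + f sqrtd * w.im := by
  conv_lhs => rw [show w = ⟨w.re, w.im⟩ from rfl, decompose]
  simp only [map_add, map_mul, map_intCast]

theorem map_sqrtd_pow_char (hq : Odd q) (f : ℤ√d →+* K) :
    f sqrtd ^ q = legendreSym q d * f sqrtd := by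
  obtain ⟨n, rfl⟩ := hq
  rw [pow_succ, pow_mul, sq, ← map_mul, dmuld, map_intCast,
    ← intCast_pow_div_two_eq_legendreSym]
  congr 2
  omega

theorem map_pow_char_s1 (hq : Odd q) (f : ℤ√d →+* K) (w : ℤ√d) :
    f w ^ q = w.re + legendreSym q d * f sqrtd * w.im := by
  rw [map_eq_re_add_sqrtd_mul_im f w, add_pow_char, mul_pow, intCast_pow_char, intCast_pow_char,
    map_sqrtd_pow_char hq]

theorem map_pow_char_of_legendreSym_eq_one (hq : Odd q) (f : ℤ√d →+* K) (w : ℤ√d)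
    (h : legendreSym q d = 1) : f w ^ q = f w := by
  rw [map_pow_char_s1 hq, h, map_eq_re_add_sqrtd_mul_im f w, Int.cast_one, one_mul]

theorem map_pow_char_of_legendreSym_eq_neg_one (hq : Odd q) (f : ℤ√d →+* K) (w : ℤ√d)
    (h : legendreSym q d = -1) : f w ^ q = f (star w) := by
  rw [map_pow_char_s1 hq, h, map_eq_re_add_sqrtd_mul_im f (star w), re_star, im_star]
  push_cast
  ring

theorem orderOf_map_dvd_sub_one_or_dvd_add_one (hq : Odd q) (hd : (d : ZMod q) ≠ 0)
    (f : ℤ√d →+* K) {w : ℤ√d} (hw : f w.norm = 1) :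
    orderOf (f w) ∣ q - 1 ∨ orderOf (f w) ∣ q + 1 := by
  have hunit : f w * f (star w) = 1 := by rw [← map_mul, ← norm_eq_mul_conj, hw]
  rcases legendreSym.eq_one_or_neg_one q hd with h | h
  · left
    apply orderOf_dvd_of_pow_eq_one
    calc f w ^ (q - 1) = f w ^ (q - 1) * (f w * f (star w)) := by rw [hunit, mul_one]
      _ = 1 := by
        rw [← mul_assoc, ← pow_succ, Nat.sub_add_cancel (Fact.out : q.Prime).one_le,
          map_pow_char_of_legendreSym_eq_one hq f w h, hunit]
  · right
    apply orderOf_dvd_of_pow_eq_one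
    rw [pow_succ, map_pow_char_of_legendreSym_eq_neg_one hq f w h, mul_comm, hunit]

end CharP

theorem two_mul_pow_le_of_dvd_aeval_cyclotomic {d : ℤ} {p q e i : ℕ} (hp : p.Prime)
    (hpodd : Odd p) (hq : q.Prime) (hqodd : Odd q) (hqp : q ≠ p) (hqd : ¬ (q : ℤ) ∣ d)
    {w : ℤ√d} (hnorm : (q : ℤ) ∣ w.norm - 1)
    (hcyc : (q : ℤ√d) ∣ aeval (w ^ e) (cyclotomic p ℤ)) (he : p ^ i ∣ e) :
    2 * p ^ (i + 1) ≤ q + 1 := by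
  have := Fact.mk hq
  obtain ⟨K, _, _, ⟨f⟩⟩ := exists_field_charP_ringHom d hq
  have hfw : f w.norm = 1 := by
    have : ((w.norm - 1 : ℤ) : K) = 0 := (CharP.intCast_eq_zero_iff K q _).mpr hnorm
    rw [map_intCast, ← sub_eq_zero]
    exact_mod_cast this
  have : NeZero (p : K) :=
    ⟨fun h => hqp ((Nat.prime_dvd_prime_iff_eq hq hp).mp ((CharP.cast_eq_zero_iff K q p).mp h))⟩
  have hord : orderOf (f w ^ e) = p := by
    refine orderOf_eq_of_aeval_cyclotomic_eq_zero ?_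
    obtain ⟨t, ht⟩ := hcyc
    have := aeval_algHom_apply f.toIntAlgHom (w ^ e) (cyclotomic p ℤ)
    simp only [RingHom.toIntAlgHom_coe, map_pow] at this
    rw [this, ht, map_mul, map_natCast, CharP.cast_eq_zero, zero_mul]
  have hdvd := pow_succ_dvd_orderOf_of_orderOf_pow_eq_prime hp hord he
  have hd : (d : ZMod q) ≠ 0 := by rwa [Ne, ZMod.intCast_zmod_eq_zero_iff_dvd]
  exact Nat.two_mul_le_add_one_of_dvd_sub_one_or_dvd_add_one hqodd hpodd.pow hq.ne_one
    ((orderOf_map_dvd_sub_one_or_dvd_add_one hqodd hd f hfw).imp hdvd.trans hdvd.trans)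

end Zsqrtd

theorem stmt_1_general (D : ℤ)
    (p : ℕ) (hp : p.Prime) (hpodd : Odd p)
    (c k ℓ : ℕ)
    (N : ℕ) (hN : N = c * k * p ^ ℓ - 1) (hNodd : Odd N)
    (hJ : jacobiSym D N = -1)
    (w : Zsqrtd D)
    (hnorm : (N : ℤ) ∣ (w.norm - 1))
    (hj : ∃ j : ℕ, 1 ≤ j ∧ j ≤ ℓ ∧
      (N : Zsqrtd D) ∣
        (Polynomial.aeval (w ^ (c * k * p ^ (j - 1))) (Polynomial.cyclotomic p ℤ)) ∧
      c * k * p ^ ℓ ≤ p ^ (2 * j)) :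
    N.Prime := by
  obtain ⟨j, hj1, hjℓ, hcyc, hsize⟩ := hj
  have hN1 : N ≠ 1 := by
    rintro rfl
    simp at hJ
  have hNsucc : N + 1 = c * k * p ^ ℓ := by have := hNodd.pos; omega
  have hcop : IsCoprime D N := by
    have : NeZero N := ⟨hNodd.pos.ne'⟩
    rw [Int.isCoprime_iff_gcd_eq_one, ← not_ne_iff, ← jacobiSym.eq_zero_iff_not_coprime, hJ]
    decide
  by_contra hNprime
  set r := N.minFac
  have hr : r.Prime := Nat.minFac_prime hN1
  have hrN : r ∣ N := Nat.minFac_dvd N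
  have hrp : r ≠ p := by
    rintro hrp
    have hpN1 : p ∣ N + 1 := hNsucc ▸ dvd_mul_of_dvd_right (dvd_pow_self p (by omega)) _
    exact hp.not_dvd_one ((Nat.dvd_add_right (hrp ▸ hrN)).mp hpN1)
  have hrD : ¬ (r : ℤ) ∣ D := fun hrD =>
    hr.not_isUnit (Int.ofNat_isUnit.mp (hcop.isUnit_of_dvd' hrD (Int.natCast_dvd_natCast.mpr hrN)))
  have hbound := Zsqrtd.two_mul_pow_le_of_dvd_aeval_cyclotomic hp hpodd hr (hNodd.of_dvd_nat hrN)
    hrp hrD ((Int.natCast_dvd_natCast.mpr hrN).trans hnorm) ((Nat.cast_dvd_cast hrN).trans hcyc)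
    (dvd_mul_left _ _)
  rw [Nat.sub_add_cancel hj1] at hbound
  have hsq : r ^ 2 ≤ N := Nat.minFac_sq_le_self hNodd.pos hNprime
  have hpj : 0 < p ^ j := pow_pos hp.pos j
  rw [pow_mul', ← hNsucc] at hsize
  nlinarith

/-- Theorem 1.2 (Generalized Lucasian Certificate): a sufficient condition for
primality of `N = c·k·p^ℓ − 1`. -/
theorem stmt_1 (D : ℤ) (hD : Squarefree D)
    (p : ℕ) (hp : p.Prime) (hpodd : Odd p)
    (c k ℓ : ℕ) (hc : 0 < c) (hk : 0 < k) (hℓ : 0 < ℓ)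
    (hgcd : Nat.gcd (c * k) p = 1)
    (N : ℕ) (hN : N = c * k * p ^ ℓ - 1) (hNodd : Odd N)
    (hJ : jacobiSym D N = -1)
    (w : Zsqrtd D)
    (hnorm : (N : ℤ) ∣ (w.norm - 1))
    (hj : ∃ j : ℕ, 1 ≤ j ∧ j ≤ ℓ ∧
      (N : Zsqrtd D) ∣
        (Polynomial.aeval (w ^ (c * k * p ^ (j - 1))) (Polynomial.cyclotomic p ℤ)) ∧
      c * k * p ^ ℓ ≤ p ^ (2 * j)) :
    N.Prime :=
  stmt_1_general D p hp hpodd c k ℓ N hN hNodd hJ w hnorm hj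
end

section
/- Let D be a squarefree integer, p an odd prime, and let c, k, ℓ be positive integers with gcd(c·k, p) = 1. Suppose N = c·k·p^ℓ − 1 is an odd prime with Jacobi symbol (D/N) = −1, and let w ∈ ℤ[√D] satisfy N(w) ≡ 1 (mod N). Then at least one of the following holds: (i) w^{c·k} ≡ 1 (mod N); or (ii) there exists an integer j with 0 ≤ j < ℓ such that Φ_p(w^{c·k·p^{j}}) ≡ 0 (mod N). -/
/-!
Since `D` is not a square modulo `N`, the rational prime `N` stays prime in `ℤ[√D]`, so
`ℤ[√D]/(N)` is a domain of characteristic `N`. There the Frobenius `z ↦ z ^ N` fixes `ℤ` and, by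
Euler's criterion, sends `√D` to `D ^ ((N - 1) / 2) √D = -√D`; hence it is conjugation, and
`w ^ (N + 1) = w · w̄ = N(w) = 1`. Thus `x = w ^ (c k)` has order dividing `p ^ ℓ`. If `x ≠ 1`,
the last power `y = x ^ (p ^ j)` different from `1` satisfies `y ^ p = 1`, and
`Φ_p(y) (y - 1) = y ^ p - 1 = 0` forces `Φ_p(y) = 0`.
-/

open Polynomial

section Cyclotomic

variable {R : Type*} [CommRing R] [NoZeroDivisors R] {p : ℕ}

theorem aeval_cyclotomic_prime_eq_zero (hp : p.Prime) {y : R} (hy : y ^ p = 1) (hy1 : y ≠ 1) :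
    aeval y (cyclotomic p ℤ) = 0 := by
  have := Fact.mk hp
  have h := congrArg (aeval y) (cyclotomic_prime_mul_X_sub_one ℤ p)
  simp only [map_mul, map_sub, map_pow, aeval_X, map_one, hy, sub_self] at h
  exact (mul_eq_zero.mp h).resolve_right (sub_ne_zero.mpr hy1)

theorem eq_one_or_exists_aeval_cyclotomic_pow_eq_zero (hp : p.Prime) {x : R} {ℓ : ℕ}
    (hx : x ^ p ^ ℓ = 1) : x = 1 ∨ ∃ j < ℓ, aeval (x ^ p ^ j) (cyclotomic p ℤ) = 0 := by
  classical
  refine or_iff_not_imp_left.mpr fun hx1 => ?_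
  have hex : ∃ m, x ^ p ^ m = 1 := ⟨ℓ, hx⟩
  have hm0 : Nat.find hex ≠ 0 := fun h => hx1 (by simpa [h] using Nat.find_spec hex)
  have hmℓ : Nat.find hex ≤ ℓ := Nat.find_min' hex hx
  refine ⟨Nat.find hex - 1, by omega, aeval_cyclotomic_prime_eq_zero hp ?_ ?_⟩
  · rw [← pow_mul, ← pow_succ, Nat.sub_add_cancel (Nat.pos_of_ne_zero hm0)]
    exact Nat.find_spec hex
  · exact Nat.find_min hex (by omega)

end Cyclotomic

namespace Zsqrtd

variable {D : ℤ} {N : ℕ} [Fact N.Prime]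

theorem natCast_dvd_of_natCast_dvd_norm (hD : ¬IsSquare (D : ZMod N)) {z : ℤ√D}
    (hz : (N : ℤ) ∣ z.norm) : (N : ℤ√D) ∣ z := by
  rw [← Int.cast_natCast, intCast_dvd]
  simp only [← ZMod.intCast_zmod_eq_zero_iff_dvd, norm_def] at hz ⊢
  push_cast at hz
  by_cases hb : (z.im : ZMod N) = 0
  · rw [hb, mul_zero, sub_zero, mul_self_eq_zero] at hz
    exact ⟨hz, hb⟩
  · exact absurd ⟨z.re / z.im, by field_simp; linear_combination -hz⟩ hD

theorem prime_natCast_s2 (hD : ¬IsSquare (D : ZMod N)) : Prime (N : ℤ√D) := by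
  have hNZ : Prime (N : ℤ) := Nat.prime_iff_prime_int.mp Fact.out
  refine ⟨Nat.cast_ne_zero.mpr (Fact.out : N.Prime).ne_zero, fun hu => ?_, fun z z' ⟨u, hu⟩ => ?_⟩
  · have h1 : ((N : ℤ) : ℤ√D) ∣ ((1 : ℤ) : ℤ√D) := by
      rw [Int.cast_natCast, Int.cast_one]; exact hu.dvd
    exact hNZ.not_isUnit (isUnit_of_dvd_one ((intCast_dvd_intCast _ _).mp h1))
  · have hnorm : (N : ℤ) ∣ z.norm * z'.norm := by
      rw [← norm_mul, hu, norm_mul, norm_natCast]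
      exact dvd_mul_of_dvd_left (dvd_mul_right _ _) _
    exact (hNZ.dvd_or_dvd hnorm).imp (natCast_dvd_of_natCast_dvd_norm hD)
      (natCast_dvd_of_natCast_dvd_norm hD)

local notation "𝔽" => ℤ√D ⧸ Ideal.span {(N : ℤ√D)}

theorem mk_pow_eq_mk_star (hJ : jacobiSym D N = -1) (z : ℤ√D) :
    Ideal.Quotient.mk _ z ^ N = (Ideal.Quotient.mk _ (star z) : 𝔽) := by
  have hD : ¬IsSquare (D : ZMod N) := ZMod.nonsquare_iff_jacobiSym_eq_neg_one.mp hJ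
  have : CharP 𝔽 N := CharP.quotient _ N (prime_natCast_s2 hD).not_isUnit
  have hodd : 2 * (N / 2) + 1 = N := by
    rcases (Fact.out : N.Prime).eq_two_or_odd' with rfl | hodd
    · exact absurd (FiniteField.isSquare_of_char_two (ZMod.ringChar_zmod_n 2) _) hD
    · exact Nat.two_mul_div_two_add_one_of_odd hodd
  let ι : ZMod N →+* 𝔽 := ZMod.castHom dvd_rfl 𝔽
  have hint (m : ℤ) : (m : 𝔽) ^ N = m := by
    rw [← map_intCast ι, ← map_pow, ZMod.pow_card]
  have hsqrtd : (Ideal.Quotient.mk _ sqrtd : 𝔽) ^ N = -Ideal.Quotient.mk _ sqrtd := by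
    have hsq : (Ideal.Quotient.mk _ sqrtd : 𝔽) ^ 2 = D := by
      rw [← map_pow, sq, dmuld, map_intCast]
    have hEuler : (D : 𝔽) ^ (N / 2) = -1 := by
      rw [← map_intCast ι, ← map_pow, ← legendreSym.eq_pow, jacobiSym.legendreSym.to_jacobiSym,
        hJ]
      simp
    calc (Ideal.Quotient.mk _ sqrtd : 𝔽) ^ N = (Ideal.Quotient.mk _ sqrtd ^ 2) ^ (N / 2) *
          Ideal.Quotient.mk _ sqrtd := by rw [← pow_mul, ← pow_succ, hodd]
      _ = _ := by rw [hsq, hEuler, neg_one_mul]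
  obtain ⟨x, y⟩ := z
  rw [star_mk, decompose, decompose]
  simp only [map_add, map_mul, map_intCast]
  rw [add_pow_char, mul_pow, hint, hint, hsqrtd]
  push_cast
  ring

theorem mk_pow_succ_eq_one (hJ : jacobiSym D N = -1) {z : ℤ√D} (hz : (N : ℤ) ∣ z.norm - 1) :
    (Ideal.Quotient.mk _ z : 𝔽) ^ (N + 1) = 1 := by
  rw [pow_succ, mk_pow_eq_mk_star hJ, ← map_mul, mul_comm, ← norm_eq_mul_conj, ← map_one
    (Ideal.Quotient.mk _), Ideal.Quotient.eq, Ideal.mem_span_singleton, ← Int.cast_natCast,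
    ← Int.cast_one, ← Int.cast_sub, intCast_dvd_intCast]
  exact hz

end Zsqrtd

theorem stmt_2_general (D : ℤ)
    (p : ℕ) (hp : p.Prime)
    (c k ℓ : ℕ)
    (N : ℕ) (hN : N = c * k * p ^ ℓ - 1) (hNprime : N.Prime)
    (hJ : jacobiSym D N = -1)
    (w : Zsqrtd D)
    (hnorm : (N : ℤ) ∣ (w.norm - 1)) :
    (N : Zsqrtd D) ∣ (w ^ (c * k) - 1) ∨
      ∃ j : ℕ, j < ℓ ∧
        (N : Zsqrtd D) ∣
          (Polynomial.aeval (w ^ (c * k * p ^ j)) (Polynomial.cyclotomic p ℤ)) := by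
  have := Fact.mk hNprime
  let φ := Ideal.Quotient.mk (Ideal.span {(N : ℤ√D)})
  have : IsDomain (ℤ√D ⧸ Ideal.span {(N : ℤ√D)}) :=
    (Ideal.Quotient.isDomain_iff_prime _).mpr <| (Ideal.span_singleton_prime
      (Nat.cast_ne_zero.mpr hNprime.ne_zero)).mpr <|
      Zsqrtd.prime_natCast_s2 (ZMod.nonsquare_iff_jacobiSym_eq_neg_one.mp hJ)
  have hw : (φ w ^ (c * k)) ^ p ^ ℓ = 1 := by
    rw [← pow_mul, show c * k * p ^ ℓ = N + 1 by have := hNprime.two_le; omega]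
    exact Zsqrtd.mk_pow_succ_eq_one hJ hnorm
  simp only [← Ideal.Quotient.eq_zero_iff_dvd]
  rcases eq_one_or_exists_aeval_cyclotomic_pow_eq_zero hp hw with h | ⟨j, hj, h⟩
  · left
    rw [map_sub, map_pow, map_one]
    exact sub_eq_zero.mpr h
  · refine Or.inr ⟨j, hj, ?_⟩
    rw [← pow_mul, ← map_pow] at h
    exact (aeval_algHom_apply φ.toIntAlgHom _ _).symm.trans h

/-- Theorem 1.3 (Generalized Miller–Rabin): if `N = c·k·p^ℓ − 1` is an odd prime
then every norm-one `w` satisfies one of the two conditions. -/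
theorem stmt_2 (D : ℤ) (hD : Squarefree D)
    (p : ℕ) (hp : p.Prime) (hpodd : Odd p)
    (c k ℓ : ℕ) (hc : 0 < c) (hk : 0 < k) (hℓ : 0 < ℓ)
    (hgcd : Nat.gcd (c * k) p = 1)
    (N : ℕ) (hN : N = c * k * p ^ ℓ - 1) (hNodd : Odd N) (hNprime : N.Prime)
    (hJ : jacobiSym D N = -1)
    (w : Zsqrtd D)
    (hnorm : (N : ℤ) ∣ (w.norm - 1)) :
    (N : Zsqrtd D) ∣ (w ^ (c * k) - 1) ∨
      ∃ j : ℕ, j < ℓ ∧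
        (N : Zsqrtd D) ∣
          (Polynomial.aeval (w ^ (c * k * p ^ j)) (Polynomial.cyclotomic p ℤ)) :=
  stmt_2_general D p hp c k ℓ N hN hNprime hJ w hnorm
end

section
/- Let N be an odd prime and let D be a squarefree integer with Jacobi symbol (D/N) = −1. Write N + 1 = 2^s · u with u odd and s ≥ 1. Let w ∈ ℤ[√D] satisfy N(w) ≡ 1 (mod N), w ≢ 1 (mod N) and w ≢ −1 (mod N). Then at least one of the following holds: (a) w^u ≡ 1 (mod N); or (b) there exists an integer r with 0 ≤ r < s such that w^{2^r · u} ≡ −1 (mod N). -/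
/-!
Reduce modulo `N`: since `D` is not a square mod `N`, a square root `δ` of `D` in an algebraic
closure of `𝔽_N` is not in `𝔽_N`, so `a + b√D ↦ a + bδ` maps `ℤ[√D]` into a field with kernel
`N·ℤ[√D]`. By Euler's criterion `δ^N = -δ`, so the Frobenius acts as conjugation and the image
`x` of `w` satisfies `x^(N+1) = N(w) = 1`. In a field the only square roots of `1` are `±1`, so
halving the exponent `2^s·u` step by step gives the Miller–Rabin alternative.
-/

theorem pow_eq_one_or_exists_pow_two_pow_mul_eq_neg_one {R : Type*} [Ring R] [NoZeroDivisors R]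
    {x : R} {u : ℕ} : ∀ {s : ℕ}, x ^ (2 ^ s * u) = 1 →
      x ^ u = 1 ∨ ∃ r < s, x ^ (2 ^ r * u) = -1
  | 0, h => .inl (by simpa using h)
  | s + 1, h => by
    have hsq : x ^ (2 ^ s * u) * x ^ (2 ^ s * u) = 1 := by
      rw [← pow_add, ← h]; ring_nf
    rcases mul_self_eq_one_iff.mp hsq with h1 | h1
    · exact (pow_eq_one_or_exists_pow_two_pow_mul_eq_neg_one h1).imp_right
        fun ⟨r, hr, hx⟩ => ⟨r, hr.trans s.lt_succ_self, hx⟩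
    · exact .inr ⟨s, s.lt_succ_self, h1⟩

section SquareRootModPrime

variable {p : ℕ} [Fact p.Prime] {K : Type*} [Field K] [CharP K p] {D : ℤ} {δ : K}

theorem pow_char_eq_neg_of_mul_self_eq (hp : Odd p) (hδ : δ * δ = D)
    (hD : legendreSym p D = -1) : δ ^ p = -δ := by
  have hEuler : (D : K) ^ (p / 2) = -1 := by
    simpa [hD] using (congrArg (ZMod.castHom (dvd_refl p) K) (legendreSym.eq_pow p D)).symm
  rw [← Nat.two_mul_div_two_add_one_of_odd hp, pow_succ, pow_mul, sq, hδ, hEuler, neg_one_mul]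

theorem Zsqrtd.lift_star_eq_pow_char (hp : Odd p) (hδ : δ * δ = D)
    (hD : legendreSym p D = -1) (z : ℤ√D) :
    Zsqrtd.lift ⟨δ, hδ⟩ (star z) = Zsqrtd.lift ⟨δ, hδ⟩ z ^ p := by
  have hfrob (m : ℤ) : (m : K) ^ p = m := by
    rw [← frobenius_def, map_intCast]
  simp only [Zsqrtd.lift_apply_apply, Zsqrtd.re_star, Zsqrtd.im_star]
  rw [add_pow_char, mul_pow, hfrob, hfrob, pow_char_eq_neg_of_mul_self_eq hp hδ hD]
  push_cast; ring

theorem Zsqrtd.lift_pow_char_succ (hp : Odd p) (hδ : δ * δ = D)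
    (hD : legendreSym p D = -1) (z : ℤ√D) :
    Zsqrtd.lift ⟨δ, hδ⟩ z ^ (p + 1) = z.norm := by
  rw [pow_succ, ← Zsqrtd.lift_star_eq_pow_char hp hδ hD, ← map_mul, mul_comm,
    ← Zsqrtd.norm_eq_mul_conj, map_intCast]

theorem Zsqrtd.natCast_dvd_of_lift_eq_zero (hδ : δ * δ = D) (hD : legendreSym p D = -1)
    {z : ℤ√D} (hz : Zsqrtd.lift ⟨δ, hδ⟩ z = 0) : (p : ℤ√D) ∣ z := by
  rw [Zsqrtd.lift_apply_apply] at hz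
  have him : (z.im : K) = 0 := by
    by_contra him
    refine (legendreSym.eq_neg_one_iff p).mp hD ⟨z.re / z.im, ZMod.castHom_injective K ?_⟩
    have hδ' : δ = -(z.re / z.im) := by
      field_simp; linear_combination hz
    simp only [map_intCast, map_mul, map_div₀, ← hδ, hδ']
    ring
  have hre : (z.re : K) = 0 := by simpa [him] using hz
  rw [← Int.cast_natCast, Zsqrtd.intCast_dvd]
  exact ⟨(CharP.intCast_eq_zero_iff K p _).mp hre, (CharP.intCast_eq_zero_iff K p _).mp him⟩

end SquareRootModPrime
theorem stmt_3_general (N : ℕ) (hNprime : N.Prime) (hNodd : Odd N)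
    (D : ℤ) (hJ : jacobiSym D N = -1)
    (s u : ℕ) (hsu : N + 1 = 2 ^ s * u)
    (w : Zsqrtd D)
    (hnorm : (N : ℤ) ∣ (w.norm - 1)) :
    (N : Zsqrtd D) ∣ (w ^ u - 1) ∨
      ∃ r : ℕ, r < s ∧ (N : Zsqrtd D) ∣ (w ^ (2 ^ r * u) + 1) := by
  have : Fact N.Prime := ⟨hNprime⟩
  have hleg : legendreSym N D = -1 := by rwa [jacobiSym.legendreSym.to_jacobiSym]
  obtain ⟨δ, hδ⟩ := IsAlgClosed.exists_pow_nat_eq (D : AlgebraicClosure (ZMod N)) two_pos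
  rw [sq] at hδ
  set φ := Zsqrtd.lift ⟨δ, hδ⟩
  have hdvd {z : ℤ√D} (c : ℤ√D) (hz : φ z = φ c) : (N : ℤ√D) ∣ z - c :=
    Zsqrtd.natCast_dvd_of_lift_eq_zero hδ hleg (by rw [map_sub, hz, sub_self])
  have hx : φ w ^ (2 ^ s * u) = 1 := by
    rw [← hsu, Zsqrtd.lift_pow_char_succ hNodd hδ hleg, ← sub_eq_zero, ← Int.cast_one,
      ← Int.cast_sub, CharP.intCast_eq_zero_iff _ N]
    exact hnorm
  rcases pow_eq_one_or_exists_pow_two_pow_mul_eq_neg_one hx with h | ⟨r, hr, h⟩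
  · exact .inl (hdvd 1 (by rw [map_pow, h, map_one]))
  · exact .inr ⟨r, hr, by simpa using hdvd (-1) (by rw [map_pow, h, map_neg, map_one])⟩

/-- Theorem 1.4: a Miller–Rabin style statement for `N + 1 = 2^s·u` in the
norm-one group of `ℤ[√D]` modulo an odd prime `N`. -/
theorem stmt_3 (N : ℕ) (hNprime : N.Prime) (hNodd : Odd N)
    (D : ℤ) (hD : Squarefree D) (hJ : jacobiSym D N = -1)
    (s u : ℕ) (hs : 1 ≤ s) (hu : Odd u) (hsu : N + 1 = 2 ^ s * u)
    (w : Zsqrtd D)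
    (hnorm : (N : ℤ) ∣ (w.norm - 1))
    (hw1 : ¬ (N : Zsqrtd D) ∣ (w - 1))
    (hw2 : ¬ (N : Zsqrtd D) ∣ (w + 1)) :
    (N : Zsqrtd D) ∣ (w ^ u - 1) ∨
      ∃ r : ℕ, r < s ∧ (N : Zsqrtd D) ∣ (w ^ (2 ^ r * u) + 1) :=
  stmt_3_general N hNprime hNodd D hJ s u hsu w hnorm
end

section
/- Let p be an odd prime and let D be an integer with D ≡ 1 (mod 4) and p ∤ D. Then the number of pairs (a, b) ∈ (ℤ/pℤ) × (ℤ/pℤ) satisfying a² + a·b + ((1 − D)/4)·b² = 1 equals p − (D/p), where (D/p) is the Legendre symbol. (In particular, the group 𝒢_p(D) has order p − (D/p) when D ≡ 1 (mod 4).) -/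
/-!
Completing the square, `4(a² + ab + cb²) = (2a + b)² - Db²` with `D = 1 - 4c`, so it suffices to
count the points of `u² - Dv² = 4`. Summing over `v` the number `1 + χ(4 + Dv²)` of square roots
turns this into `p + ∑ χ(w)χ(4 + Dw)`, and after rescaling `w` the character sum is `χ(-D)` times
the Jacobi sum `J(χ, χ) = -χ(-1)`, that is, `-χ(D)`.
-/

section QuadraticCount

variable {F : Type*} [Field F] [Fintype F] [DecidableEq F]

lemma card_sq_eq (hF : ringChar F ≠ 2) (a : F) :
    (Fintype.card {x : F // x ^ 2 = a} : ℤ) = quadraticChar F a + 1 := by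
  rw [← quadraticChar_card_sqrts hF a, Set.toFinset_card]
  rfl

lemma sum_comp_sq (hF : ringChar F ≠ 2) (f : F → ℤ) :
    ∑ x : F, f (x ^ 2) = ∑ a : F, (quadraticChar F a + 1) * f a := by
  rw [← Fintype.sum_fiberwise (fun x : F => x ^ 2) (fun x => f (x ^ 2))]
  refine Fintype.sum_congr _ _ fun a => ?_
  rw [← card_sq_eq hF, Fintype.sum_congr _ (fun _ => f a) fun x => by rw [x.2],
    Finset.sum_const, nsmul_eq_mul, Finset.card_univ]

lemma sum_quadraticChar_affine (hF : ringChar F ≠ 2) (k : F) {d : F} (hd : d ≠ 0) :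
    ∑ w : F, quadraticChar F (k + d * w) = 0 := by
  rw [← quadraticChar_sum_zero hF]
  exact Fintype.sum_equiv ((Equiv.mulLeft₀ d hd).trans (Equiv.addLeft k)) _ _ fun _ => rfl

lemma sum_quadraticChar_mul_quadraticChar_add (hF : ringChar F ≠ 2) {k : F} (hk : k ≠ 0) :
    ∑ s : F, quadraticChar F s * quadraticChar F (s + k) = -1 := by
  have hJ := jacobiSum_nontrivial_inv (quadraticChar_ne_one hF)
  rw [(quadraticChar_isQuadratic F).inv, jacobiSum] at hJ
  have hsub : ∀ u : F, quadraticChar F (-k * u) * quadraticChar F (-k * u + k) =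
      quadraticChar F (-1) * (quadraticChar F u * quadraticChar F (1 - u)) := by
    intro u
    rw [show -k * u + k = k * (1 - u) by ring, neg_mul, ← neg_one_mul, map_mul, map_mul, map_mul]
    linear_combination (quadraticChar F (-1) * quadraticChar F u * quadraticChar F (1 - u)) *
      quadraticChar_sq_one hk
  calc ∑ s : F, quadraticChar F s * quadraticChar F (s + k)
      = ∑ u : F, quadraticChar F (-k * u) * quadraticChar F (-k * u + k) :=
        (Fintype.sum_equiv (Equiv.mulLeft₀ (-k) (neg_ne_zero.2 hk)) _ _ fun _ => rfl).symm
    _ = -1 := by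
      rw [Fintype.sum_congr _ _ hsub, ← Finset.mul_sum, hJ]
      linear_combination -quadraticChar_sq_one (F := F) (neg_ne_zero.2 one_ne_zero)

lemma sum_quadraticChar_mul_quadraticChar_add_mul (hF : ringChar F ≠ 2) {k d : F} (hk : k ≠ 0)
    (hd : d ≠ 0) :
    ∑ w : F, quadraticChar F w * quadraticChar F (k + d * w) = -quadraticChar F d := by
  have hdd := quadraticChar_sq_one hd
  calc ∑ w : F, quadraticChar F w * quadraticChar F (k + d * w)
      = quadraticChar F d * ∑ w : F, quadraticChar F (d * w) * quadraticChar F (d * w + k) := by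
        rw [Finset.mul_sum]
        refine Fintype.sum_congr _ _ fun w => ?_
        rw [map_mul, add_comm k]
        linear_combination -(quadraticChar F w * quadraticChar F (d * w + k)) * hdd
    _ = -quadraticChar F d := by
      rw [Fintype.sum_equiv (Equiv.mulLeft₀ d hd)
        (fun w => quadraticChar F (d * w) * quadraticChar F (d * w + k))
        (fun s => quadraticChar F s * quadraticChar F (s + k)) fun _ => rfl,
        sum_quadraticChar_mul_quadraticChar_add hF hk, mul_neg_one]

lemma card_sq_sub_mul_sq_eq (hF : ringChar F ≠ 2) {d k : F} (hd : d ≠ 0) (hk : k ≠ 0) :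
    (Fintype.card {uv : F × F // uv.1 ^ 2 - d * uv.2 ^ 2 = k} : ℤ) =
      Fintype.card F - quadraticChar F d := by
  have hfib : {uv : F × F // uv.1 ^ 2 - d * uv.2 ^ 2 = k} ≃
      Σ v : F, {u : F // u ^ 2 = k + d * v ^ 2} :=
    (Equiv.subtypeEquiv (Equiv.prodComm F F) fun uv => by
      simp only [Equiv.prodComm_apply, Prod.fst_swap, Prod.snd_swap, sub_eq_iff_eq_add',
        add_comm k]).trans
      (Equiv.subtypeProdEquivSigmaSubtype fun v u => u ^ 2 = k + d * v ^ 2)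
  rw [Fintype.card_congr hfib, Fintype.card_sigma, Nat.cast_sum]
  simp only [card_sq_eq hF, Finset.sum_add_distrib, Finset.sum_const, Finset.card_univ,
    nsmul_eq_mul, mul_one]
  rw [sum_comp_sq hF fun a => quadraticChar F (k + d * a)]
  simp only [add_mul, one_mul, Finset.sum_add_distrib,
    sum_quadraticChar_mul_quadraticChar_add_mul hF hk hd, sum_quadraticChar_affine hF k hd]
  ring

lemma card_sq_add_mul_add_mul_sq_eq (hF : ringChar F ≠ 2) {b c k : F} (hdisc : b ^ 2 - 4 * c ≠ 0)
    (hk : k ≠ 0) :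
    (Fintype.card {xy : F × F // xy.1 ^ 2 + b * xy.1 * xy.2 + c * xy.2 ^ 2 = k} : ℤ) =
      Fintype.card F - quadraticChar F (b ^ 2 - 4 * c) := by
  have h2 : (2 : F) ≠ 0 := Ring.two_ne_zero hF
  have h4 : (4 : F) ≠ 0 := by simpa [show (4 : F) = 2 ^ 2 by norm_num] using h2
  have hcomplete : {xy : F × F // xy.1 ^ 2 + b * xy.1 * xy.2 + c * xy.2 ^ 2 = k} ≃
      {uv : F × F // uv.1 ^ 2 - (b ^ 2 - 4 * c) * uv.2 ^ 2 = 4 * k} :=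
    { toFun xy := ⟨(2 * xy.1.1 + b * xy.1.2, xy.1.2), by linear_combination 4 * xy.2⟩
      invFun uv := ⟨((uv.1.1 - b * uv.1.2) / 2, uv.1.2), by
        field_simp
        linear_combination uv.2⟩
      left_inv xy := by ext <;> simp [h2]
      right_inv uv := by ext <;> simp [mul_div_cancel₀ _ h2] }
  rw [Fintype.card_congr hcomplete, card_sq_sub_mul_sq_eq hF hdisc (mul_ne_zero h4 hk)]

end QuadraticCount

/-- Theorem 2.1 (case `D ≡ 1 (mod 4)`): the number of solutions of
`a² + a·b + ((1 − D)/4)·b² = 1` over `ℤ/pℤ` equals `p − (D/p)`. -/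
theorem stmt_5 (p : ℕ) [Fact p.Prime] (hpodd : Odd p)
    (D : ℤ) (hD4 : D % 4 = 1) (hpD : ¬ (p : ℤ) ∣ D) :
    (Fintype.card {ab : ZMod p × ZMod p //
        ab.1 ^ 2 + ab.1 * ab.2 + (((1 - D) / 4 : ℤ) : ZMod p) * ab.2 ^ 2 = 1} : ℤ) =
      p - legendreSym p D := by
  have hF : ringChar (ZMod p) ≠ 2 := by
    rw [ZMod.ringChar_zmod_n]
    rintro rfl
    exact Nat.not_odd_iff_even.2 even_two hpodd
  have hdisc : (1 : ZMod p) ^ 2 - 4 * (((1 - D) / 4 : ℤ) : ZMod p) = D := by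
    have h4 : 4 * ((1 - D) / 4) = 1 - D := Int.mul_ediv_cancel' (by omega)
    rw [← Int.cast_ofNat, ← Int.cast_mul, h4]
    push_cast
    ring
  have hD : (D : ZMod p) ≠ 0 := by rwa [Ne, ZMod.intCast_zmod_eq_zero_iff_dvd]
  have := card_sq_add_mul_add_mul_sq_eq hF (hdisc ▸ hD) one_ne_zero
  simpa only [one_mul, hdisc, ZMod.card, legendreSym] using this
end

section
/- Let p be an odd prime and D a squarefree integer with p ∤ D. Then the norm-one group modulo p is cyclic: there exists g ∈ ℤ[√D] with N(g) ≡ 1 (mod p) such that for every w ∈ ℤ[√D] with N(w) ≡ 1 (mod p) there exists a natural number k with w ≡ g^k (mod p). -/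
/-!
Reduce modulo `p` by a ring map `φ : ℤ[√D] → K` into a finite field of characteristic `p`
sending `√D` to a square root `s` of `D`; the splitting field of `X² - D` over `𝔽_p` provides
one. Since `p` is odd and `p ∤ D`, the pair `(φ z, φ z̄) = (a + b s, a - b s)` vanishes exactly
when `p ∣ z`, and for a norm-one `w` we have `φ w̄ = (φ w)⁻¹`. So `w ↦ φ w` embeds the norm-one
group modulo `p` into `Kˣ`, where every finite subgroup is cyclic.
-/

open Polynomial

namespace Zsqrtd

variable {d : ℤ}

def normOneMod (d : ℤ) (n : ℕ) : Submonoid (ℤ√d) :=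
  MonoidHom.mker ((Int.castRingHom (ZMod n) : ℤ →* ZMod n).comp normMonoidHom)

theorem mem_normOneMod {n : ℕ} {w : ℤ√d} : w ∈ normOneMod d n ↔ (n : ℤ) ∣ w.norm - 1 := by
  rw [← ZMod.intCast_eq_intCast_iff_dvd_sub, Int.cast_one, eq_comm]
  rfl

theorem star_mem_normOneMod {n : ℕ} {w : ℤ√d} (hw : w ∈ normOneMod d n) :
    star w ∈ normOneMod d n := by
  rwa [mem_normOneMod, norm_conj, ← mem_normOneMod]

section ReductionToField

variable {K : Type*} [Field K] (p : ℕ) [CharP K p] (φ : ℤ√d →+* K)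

theorem map_mul_map_star_of_mem_normOneMod {w : ℤ√d} (hw : w ∈ normOneMod d p) :
    φ w * φ (star w) = 1 := by
  have hnorm : ((w.norm - 1 : ℤ) : K) = 0 :=
    (CharP.intCast_eq_zero_iff K p _).mpr (mem_normOneMod.mp hw)
  rw [← map_mul, ← norm_eq_mul_conj, map_intCast]
  push_cast at hnorm
  exact sub_eq_zero.mp hnorm

theorem map_star_of_mem_normOneMod {w : ℤ√d} (hw : w ∈ normOneMod d p) :
    φ (star w) = (φ w)⁻¹ :=
  eq_inv_of_mul_eq_one_right (map_mul_map_star_of_mem_normOneMod p φ hw)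

def normOneUnits : Subgroup Kˣ where
  carrier := {u | ∃ w ∈ normOneMod d p, φ w = u}
  one_mem' := ⟨1, one_mem _, map_one φ⟩
  mul_mem' := by
    rintro u v ⟨w, hw, hwu⟩ ⟨w', hw', hwv⟩
    exact ⟨w * w', mul_mem hw hw', by rw [map_mul, hwu, hwv, Units.val_mul]⟩
  inv_mem' := by
    rintro u ⟨w, hw, hwu⟩
    exact ⟨star w, star_mem_normOneMod hw, by
      rw [map_star_of_mem_normOneMod p φ hw, hwu, Units.val_inv_eq_inv_val]⟩

theorem exists_map_eq_pow_normOneMod [Finite K] :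
    ∃ g ∈ normOneMod d p, ∀ w ∈ normOneMod d p, ∃ k : ℕ, φ w = φ g ^ k := by
  obtain ⟨⟨u, g, hg, hgu⟩, hgen⟩ := IsCyclic.exists_generator (α := normOneUnits p φ)
  refine ⟨g, hg, fun w hw => ?_⟩
  let v : Kˣ := Units.mkOfMulEqOne _ _ (map_mul_map_star_of_mem_normOneMod p φ hw)
  obtain ⟨k, hk⟩ := mem_powers_iff_mem_zpowers.mpr (hgen ⟨v, w, hw, rfl⟩)
  refine ⟨k, ?_⟩
  rw [hgu]
  simpa [v] using congrArg (fun x : normOneUnits p φ => ((x : Kˣ) : K)) hk.symm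

variable {s : K}

/-- `lift` sends `z = a + b√d` and `z̄` to `a + b s` and `a - b s`, whose sum and difference are
`2 a` and `2 b s`. -/
theorem natCast_dvd_iff_lift_eq_zero (hs : s * s = d) (h2 : (2 : K) ≠ 0) (hs0 : s ≠ 0)
    (z : ℤ√d) :
    (p : ℤ√d) ∣ z ↔ lift ⟨s, hs⟩ z = 0 ∧ lift ⟨s, hs⟩ (star z) = 0 := by
  rw [← Int.cast_natCast, intCast_dvd, ← CharP.intCast_eq_zero_iff K p,
    ← CharP.intCast_eq_zero_iff K p, lift_apply_apply, lift_apply_apply, re_star, im_star,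
    Int.cast_neg]
  constructor
  · rintro ⟨hre, him⟩
    simp [hre, him]
  · rintro ⟨hplus, hminus⟩
    have hre : (2 : K) * z.re = 0 := by linear_combination hplus + hminus
    have him : (2 : K) * z.im * s = 0 := by linear_combination hplus - hminus
    simp_all

theorem exists_dvd_sub_pow_normOneMod [Finite K] (hs : s * s = d) (h2 : (2 : K) ≠ 0)
    (hs0 : s ≠ 0) :
    ∃ g ∈ normOneMod d p, ∀ w ∈ normOneMod d p, ∃ k : ℕ, (p : ℤ√d) ∣ w - g ^ k := by
  set φ := lift ⟨s, hs⟩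
  obtain ⟨g, hg, hgen⟩ := exists_map_eq_pow_normOneMod p φ
  refine ⟨g, hg, fun w hw => ?_⟩
  obtain ⟨k, hk⟩ := hgen w hw
  refine ⟨k, (natCast_dvd_iff_lift_eq_zero p hs h2 hs0 _).mpr ⟨?_, ?_⟩⟩
  · rw [map_sub, map_pow, hk, sub_self]
  · rw [star_sub, star_pow, map_sub, map_pow, map_star_of_mem_normOneMod p φ hw,
      map_star_of_mem_normOneMod p φ hg, hk, inv_pow, sub_self]

end ReductionToField

end Zsqrtd

theorem SplittingField.exists_mul_self_eq_algebraMap {F : Type*} [Field F] (a : F) :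
    ∃ s : SplittingField (X ^ 2 - C a), s * s = algebraMap F _ a := by
  obtain ⟨s, hs⟩ := (SplittingField.splits (X ^ 2 - C a)).exists_eval_eq_zero (by
    rw [degree_map, degree_X_pow_sub_C two_pos]
    decide)
  refine ⟨s, ?_⟩
  simpa [sq, sub_eq_zero] using hs

theorem stmt_6_general (p : ℕ) (hp : p.Prime) (hpodd : Odd p)
    (D : ℤ) (hpD : ¬ (p : ℤ) ∣ D) :
    ∃ g : Zsqrtd D, (p : ℤ) ∣ (g.norm - 1) ∧
      ∀ w : Zsqrtd D, (p : ℤ) ∣ (w.norm - 1) →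
        ∃ k : ℕ, (p : Zsqrtd D) ∣ (w - g ^ k) := by
  have := Fact.mk hp
  set K := SplittingField (X ^ 2 - C (D : ZMod p))
  obtain ⟨s, hs⟩ : ∃ s : K, s * s = D := by
    simpa only [map_intCast] using SplittingField.exists_mul_self_eq_algebraMap (D : ZMod p)
  have h2 : (2 : K) ≠ 0 := by
    refine Ring.two_ne_zero ?_
    rw [ringChar.eq K p]
    rintro rfl
    exact absurd hpodd (by decide)
  have hs0 : s ≠ 0 := by
    rintro rfl
    exact hpD ((CharP.intCast_eq_zero_iff K p D).mp (by simpa using hs.symm))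
  simpa only [Zsqrtd.mem_normOneMod] using Zsqrtd.exists_dvd_sub_pow_normOneMod p hs h2 hs0

/-- Theorem 2.1 (cyclicity): the norm-one group of `ℤ[√D]` modulo an odd prime
`p` is cyclic: there is a norm-one `g` such that every norm-one `w` is congruent
to a power of `g` modulo `p`. -/
theorem stmt_6 (p : ℕ) (hp : p.Prime) (hpodd : Odd p)
    (D : ℤ) (hD : Squarefree D) (hpD : ¬ (p : ℤ) ∣ D) :
    ∃ g : Zsqrtd D, (p : ℤ) ∣ (g.norm - 1) ∧
      ∀ w : Zsqrtd D, (p : ℤ) ∣ (w.norm - 1) →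
        ∃ k : ℕ, (p : Zsqrtd D) ∣ (w - g ^ k) :=
  stmt_6_general p hp hpodd D hpD
end

section
/- Let D be a squarefree integer and let m, n ≥ 2 be coprime integers. Given z₁, z₂ ∈ ℤ[√D] with N(z₁) ≡ 1 (mod m) and N(z₂) ≡ 1 (mod n), there exists z ∈ ℤ[√D] such that N(z) ≡ 1 (mod m·n), z ≡ z₁ (mod m), and z ≡ z₂ (mod n). (This is the surjectivity underlying the canonical isomorphism 𝒢_{mn}(D) ≃ 𝒢_m(D) × 𝒢_n(D).) -/
/-!
Take the CRT lift `z = v n z₁ + u m z₂` (where `u m + v n = 1`). Since the norm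
is `z * star z` and conjugation fixes integers, `z ≡ w (mod k)` forces `N z ≡ N w (mod k)`; so
`N z ≡ 1` modulo both `m` and `n`, hence modulo `m n`.
-/

theorem IsCoprime.exists_dvd_sub_and_dvd_sub {R : Type*} [CommRing R] {a b : R}
    (h : IsCoprime a b) (x y : R) : ∃ z, a ∣ z - x ∧ b ∣ z - y := by
  obtain ⟨u, v, huv⟩ := h
  exact ⟨x * v * b + y * u * a, ⟨u * (y - x), by linear_combination x * huv⟩,
    ⟨v * (x - y), by linear_combination y * huv⟩⟩

namespace Zsqrtd

theorem intCast_dvd_norm_sub {d k : ℤ} {z w : ℤ√d} (h : (k : ℤ√d) ∣ z - w) :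
    k ∣ z.norm - w.norm := by
  obtain ⟨t, ht⟩ := h
  have hconj : star z - star w = k * star t := by
    rw [← star_sub, ht, star_mul, star_intCast, mul_comm]
  rw [← intCast_dvd_intCast, Int.cast_sub, norm_eq_mul_conj, norm_eq_mul_conj]
  exact ⟨t * star z + w * star t, by linear_combination star z * ht + w * hconj⟩

end Zsqrtd

theorem stmt_7_general (D : ℤ)
    (m n : ℕ) (hmn : Nat.Coprime m n)
    (z₁ z₂ : Zsqrtd D)
    (h₁ : (m : ℤ) ∣ (z₁.norm - 1)) (h₂ : (n : ℤ) ∣ (z₂.norm - 1)) :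
    ∃ z : Zsqrtd D, ((m * n : ℕ) : ℤ) ∣ (z.norm - 1) ∧
      (m : Zsqrtd D) ∣ (z - z₁) ∧ (n : Zsqrtd D) ∣ (z - z₂) := by
  have hcop : IsCoprime (m : ℤ) n := Nat.isCoprime_iff_coprime.mpr hmn
  obtain ⟨z, hz₁, hz₂⟩ :=
    (hcop.map (Int.castRingHom (Zsqrtd D))).exists_dvd_sub_and_dvd_sub z₁ z₂
  simp only [eq_intCast] at hz₁ hz₂
  have hm : (m : ℤ) ∣ z.norm - 1 :=
    sub_add_sub_cancel z.norm z₁.norm 1 ▸ dvd_add (Zsqrtd.intCast_dvd_norm_sub hz₁) h₁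
  have hn : (n : ℤ) ∣ z.norm - 1 :=
    sub_add_sub_cancel z.norm z₂.norm 1 ▸ dvd_add (Zsqrtd.intCast_dvd_norm_sub hz₂) h₂
  rw [Int.cast_natCast] at hz₁ hz₂
  exact ⟨z, Nat.cast_mul (α := ℤ) m n ▸ hcop.mul_dvd hm hn, hz₁, hz₂⟩

/-- Proposition 2.2 (surjectivity of the CRT map underlying
`𝒢_{mn}(D) ≃ 𝒢_m(D) × 𝒢_n(D)`). -/
theorem stmt_7 (D : ℤ) (hD : Squarefree D)
    (m n : ℕ) (hm : 2 ≤ m) (hn : 2 ≤ n) (hmn : Nat.Coprime m n)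
    (z₁ z₂ : Zsqrtd D)
    (h₁ : (m : ℤ) ∣ (z₁.norm - 1)) (h₂ : (n : ℤ) ∣ (z₂.norm - 1)) :
    ∃ z : Zsqrtd D, ((m * n : ℕ) : ℤ) ∣ (z.norm - 1) ∧
      (m : Zsqrtd D) ∣ (z - z₁) ∧ (n : Zsqrtd D) ∣ (z - z₂) :=
  stmt_7_general D m n hmn z₁ z₂ h₁ h₂
end

section
/- Let D be a squarefree integer and let N > 1 be an odd, squarefree, composite integer with gcd(N, D) = 1. Define 𝓕_D(n) = n − (D/n), where (D/n) is the Jacobi symbol. Then the following are equivalent: (1) for every z ∈ ℤ[√D] with N(z) ≡ 1 (mod N), one has z^{𝓕_D(N)} ≡ 1 (mod N) (i.e., N is a 𝒢(D)-Carmichael number); (2) for every prime q dividing N, 𝓕_D(q) divides 𝓕_D(N). -/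
theorem Squarefree.natCast_dvd_of_forall_prime_dvd {R : Type*} [CommRing R] {n : ℕ}
    (hn : Squarefree n) {x : R} (h : ∀ p : ℕ, p.Prime → p ∣ n → (p : R) ∣ x) :
    (n : R) ∣ x := by
  rw [← Nat.prod_primeFactors_of_squarefree hn, Nat.cast_prod]
  refine Finset.prod_dvd_of_coprime (fun p hp q hq hpq => ?_) fun p hp => ?_
  · exact ((Nat.coprime_primes (Nat.prime_of_mem_primeFactors hp)
      (Nat.prime_of_mem_primeFactors hq)).mpr hpq).cast
  · exact h p (Nat.prime_of_mem_primeFactors hp) (Nat.dvd_of_mem_primeFactors hp)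

theorem toNat_sub_jacobiSym_dvd_iff (a : ℤ) {m n : ℕ} (hm : m ≠ 0) (hn : n ≠ 0) :
    ((m : ℤ) - jacobiSym a m).toNat ∣ ((n : ℤ) - jacobiSym a n).toNat ↔
      (m : ℤ) - jacobiSym a m ∣ (n : ℤ) - jacobiSym a n := by
  have hnonneg : ∀ k : ℕ, k ≠ 0 → 0 ≤ (k : ℤ) - jacobiSym a k := fun k hk => by
    rcases jacobiSym.trichotomy a k with h | h | h <;> omega
  rw [← Int.natCast_dvd_natCast, Int.toNat_of_nonneg (hnonneg m hm),
    Int.toNat_of_nonneg (hnonneg n hn)]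

theorem intCast_ne_zero_of_dvd_of_gcd_eq_one {q N : ℕ} {D : ℤ} (hq : q.Prime) (hqN : q ∣ N)
    (hND : Int.gcd N D = 1) : (D : ZMod q) ≠ 0 := by
  rw [Ne, ZMod.intCast_zmod_eq_zero_iff_dvd]
  intro hqD
  have := Int.dvd_gcd (Int.natCast_dvd_natCast.mpr hqN) hqD
  rw [hND] at this
  exact hq.ne_one (Nat.dvd_one.mp this)

namespace QuadraticAlgebra

instance instCharP {R : Type*} [CommRing R] (p : ℕ) [CharP R p] (a b : R) :
    CharP (QuadraticAlgebra R a b) p :=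
  charP_of_injective_algebraMap algebraMap_injective p

variable {p : ℕ} [Fact p.Prime] {D : ℤ}

theorem omega_pow_prime (hp : p ≠ 2) :
    (ω : QuadraticAlgebra (ZMod p) D 0) ^ p =
      algebraMap _ _ (legendreSym p D : ZMod p) * ω := by
  have hodd : p = 2 * (p / 2) + 1 :=
    (Nat.two_mul_div_two_add_one_of_odd ((Fact.out : p.Prime).odd_of_ne_two hp)).symm
  have hsq : (ω : QuadraticAlgebra (ZMod p) D 0) ^ 2 = algebraMap _ _ (D : ZMod p) := by
    simp [sq, omega_mul_omega_eq_algebraMap]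
  rw [legendreSym.eq_pow, map_pow, ← hsq, ← pow_mul, ← pow_succ, ← hodd]

theorem pow_prime (hp : p ≠ 2) (z : QuadraticAlgebra (ZMod p) D 0) :
    z ^ p = ⟨z.re, legendreSym p D * z.im⟩ := by
  conv_lhs => rw [← mk_eta z, mk_eq_add_smul_omega]
  rw [add_pow_char, ← map_pow, smul_pow, ZMod.pow_card, ZMod.pow_card, omega_pow_prime hp]
  ext <;> simp [Algebra.smul_def, mul_comm]

theorem pow_sub_legendreSym_eq_one (hp : p ≠ 2) (hD : (D : ZMod p) ≠ 0)
    {z : QuadraticAlgebra (ZMod p) D 0} (hz : norm z = 1) :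
    z ^ ((p : ℤ) - legendreSym p D).toNat = 1 := by
  have hstar : z * star z = 1 := by rw [← algebraMap_norm_eq_mul_star, hz, map_one]
  have hp1 : 1 ≤ p := (Fact.out : p.Prime).one_le
  rcases legendreSym.eq_one_or_neg_one p hD with h | h
  · have hfix : z ^ p = z := by rw [pow_prime hp, h]; simp
    rw [h, show ((p : ℤ) - 1).toNat = p - 1 by omega]
    calc z ^ (p - 1) = z ^ (p - 1) * (z * star z) := by rw [hstar, mul_one]
      _ = z ^ p * star z := by rw [← mul_assoc, ← pow_succ, Nat.sub_add_cancel hp1]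
      _ = 1 := by rw [hfix, hstar]
  · have hconj : z ^ p = star z := by rw [pow_prime hp, h]; ext <;> simp
    rw [h, show ((p : ℤ) - -1).toNat = p + 1 by omega, pow_succ, hconj, mul_comm, hstar]

theorem exists_norm_eq_one_sub_one_dvd_orderOf (hp : p ≠ 2) (hD : IsSquare (D : ZMod p))
    (hD0 : (D : ZMod p) ≠ 0) :
    ∃ z : QuadraticAlgebra (ZMod p) D 0, norm z = 1 ∧ p - 1 ∣ orderOf z := by
  obtain ⟨s, hs⟩ := hD
  have hs0 : s ≠ 0 := by rintro rfl; exact hD0 (by rw [hs, mul_zero])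
  have h2 : (2 : ZMod p) ≠ 0 := Ring.two_ne_zero (by rwa [ZMod.ringChar_zmod_n])
  obtain ⟨g, hg⟩ := IsCyclic.exists_ofOrder_eq_natCard (α := (ZMod p)ˣ)
  set u : ZMod p := (g : ZMod p)
  have hu : u ≠ 0 := g.ne_zero
  let φ : QuadraticAlgebra (ZMod p) D 0 →ₐ[ZMod p] ZMod p := lift ⟨s, by simp [hs]⟩
  -- `z` maps to `u` under `√D ↦ s` and to `u⁻¹` under `√D ↦ -s`.
  let z : QuadraticAlgebra (ZMod p) D 0 := ⟨(u + u⁻¹) / 2, (u - u⁻¹) / (2 * s)⟩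
  have hφz : φ z = u := by
    simp only [smul_eq_mul, lift_apply_apply, mul_one, φ, z]
    field_simp
    ring
  refine ⟨z, ?_, ?_⟩
  · simp only [norm_def, zero_mul, add_zero, hs, z]
    field_simp
    ring
  · have := orderOf_map_dvd (φ : QuadraticAlgebra (ZMod p) D 0 →* ZMod p) z
    rwa [MonoidHom.coe_coe, hφz, orderOf_units, hg, Nat.card_eq_fintype_card,
      ZMod.card_units] at this

theorem exists_norm_eq_one_add_one_dvd_orderOf (hp : p ≠ 2) (hD : ¬ IsSquare (D : ZMod p)) :
    ∃ z : QuadraticAlgebra (ZMod p) D 0, norm z = 1 ∧ p + 1 ∣ orderOf z := by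
  have : Fact (∀ r : ZMod p, r ^ 2 ≠ D + 0 * r) :=
    ⟨fun r hr => hD ⟨r, by rw [zero_mul, add_zero] at hr; rw [← hr, sq]⟩⟩
  have : Finite (QuadraticAlgebra (ZMod p) D 0) := Finite.of_equiv _ (equivProd _ _).symm
  obtain ⟨γ, hγ⟩ :=
    IsCyclic.exists_ofOrder_eq_natCard (α := (QuadraticAlgebra (ZMod p) D 0)ˣ)
  have hcard : orderOf (γ : QuadraticAlgebra (ZMod p) D 0) = (p - 1) * (p + 1) := by
    rw [orderOf_units, hγ, Nat.card_units, Module.natCard_eq_pow_finrank (K := ZMod p),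
      finrank_eq_two, Nat.card_zmod]
    have := (Fact.out : p.Prime).one_le
    zify [this, Nat.one_le_pow 2 p (by omega)]
    ring
  set z := (γ : QuadraticAlgebra (ZMod p) D 0) ^ (p - 1)
  refine ⟨z, ?_, ?_⟩
  · have hconj : z ^ p = star z := by
      rw [pow_prime hp, (legendreSym.eq_neg_one_iff p).mpr hD]
      ext <;> simp
    apply (algebraMap_injective :
      Function.Injective (algebraMap (ZMod p) (QuadraticAlgebra (ZMod p) D 0)))
    rw [algebraMap_norm_eq_mul_star, ← hconj, ← pow_succ', map_one, ← pow_mul, ← hcard,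
      pow_orderOf_eq_one]
  · have hp1 : 0 < p - 1 := Nat.sub_pos_of_lt (Fact.out : p.Prime).one_lt
    rw [orderOf_pow_of_dvd hp1.ne' (hcard ▸ dvd_mul_right _ _), hcard,
      Nat.mul_div_cancel_left _ hp1]

theorem exists_norm_eq_one_orderOf_eq (hp : p ≠ 2) (hD : (D : ZMod p) ≠ 0) :
    ∃ z : QuadraticAlgebra (ZMod p) D 0,
      norm z = 1 ∧ orderOf z = ((p : ℤ) - legendreSym p D).toNat := by
  suffices ∃ z : QuadraticAlgebra (ZMod p) D 0,
      norm z = 1 ∧ ((p : ℤ) - legendreSym p D).toNat ∣ orderOf z by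
    obtain ⟨z, hz, hdvd⟩ := this
    exact ⟨z, hz, Nat.dvd_antisymm
      (orderOf_dvd_of_pow_eq_one (pow_sub_legendreSym_eq_one hp hD hz)) hdvd⟩
  rcases legendreSym.eq_one_or_neg_one p hD with h | h
  · rw [h, show ((p : ℤ) - 1).toNat = p - 1 by omega]
    exact exists_norm_eq_one_sub_one_dvd_orderOf hp ((legendreSym.eq_one_iff p hD).mp h) hD
  · rw [h, show ((p : ℤ) - -1).toNat = p + 1 by omega]
    exact exists_norm_eq_one_add_one_dvd_orderOf hp ((legendreSym.eq_neg_one_iff p).mp h)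

end QuadraticAlgebra

namespace Zsqrtd

variable {D : ℤ}

def reduceMod (D : ℤ) (n : ℕ) : ℤ√D →+* QuadraticAlgebra (ZMod n) D 0 :=
  lift ⟨QuadraticAlgebra.omega, by rw [QuadraticAlgebra.omega_mul_omega_eq_mk]; rfl⟩

theorem reduceMod_apply (n : ℕ) (z : ℤ√D) : reduceMod D n z = ⟨z.re, z.im⟩ := by
  ext <;> simp [reduceMod]

theorem reduceMod_surjective (n : ℕ) : Function.Surjective (reduceMod D n) := by
  intro w
  refine ⟨⟨w.re.cast, w.im.cast⟩, ?_⟩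
  ext <;> simp [reduceMod_apply]

theorem norm_reduceMod (n : ℕ) (z : ℤ√D) :
    QuadraticAlgebra.norm (reduceMod D n z) = z.norm := by
  simp [reduceMod_apply, QuadraticAlgebra.norm_def, norm_def]

theorem natCast_dvd_iff_reduceMod_eq_zero (n : ℕ) (z : ℤ√D) :
    (n : ℤ√D) ∣ z ↔ reduceMod D n z = 0 := by
  rw [← Int.cast_natCast, intCast_dvd, reduceMod_apply, QuadraticAlgebra.ext_iff]
  simp [ZMod.intCast_zmod_eq_zero_iff_dvd]

theorem natCast_dvd_sub_iff (n : ℕ) (z w : ℤ√D) :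
    (n : ℤ√D) ∣ z - w ↔ reduceMod D n z = reduceMod D n w := by
  rw [natCast_dvd_iff_reduceMod_eq_zero, map_sub, sub_eq_zero]

theorem intCast_dvd_norm_sub_one_iff (n : ℕ) (z : ℤ√D) :
    (n : ℤ) ∣ z.norm - 1 ↔ QuadraticAlgebra.norm (reduceMod D n z) = 1 := by
  rw [norm_reduceMod, ← ZMod.intCast_zmod_eq_zero_iff_dvd, Int.cast_sub, Int.cast_one,
    sub_eq_zero]

theorem exists_norm_sub_one_dvd_and_reduceMod_eq {m n : ℕ} (h : m.Coprime n)
    {u : QuadraticAlgebra (ZMod m) D 0} (hu : QuadraticAlgebra.norm u = 1) :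
    ∃ z : ℤ√D, ((m * n : ℕ) : ℤ) ∣ z.norm - 1 ∧ reduceMod D m z = u := by
  obtain ⟨x, rfl⟩ := reduceMod_surjective m u
  obtain ⟨z, hzx, hz1⟩ := (h.cast (R := ℤ√D)).exists_dvd_sub_and_dvd_sub x 1
  rw [natCast_dvd_sub_iff] at hzx hz1
  refine ⟨z, ?_, hzx⟩
  rw [Nat.cast_mul]
  refine h.cast.mul_dvd ?_ ?_
  · rw [intCast_dvd_norm_sub_one_iff, hzx, hu]
  · rw [intCast_dvd_norm_sub_one_iff, hz1, map_one, QuadraticAlgebra.norm_one]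

variable {N : ℕ}

theorem korselt_of_carmichael (hNodd : Odd N) (hNsf : Squarefree N)
    (hND : Int.gcd (N : ℤ) D = 1)
    (h : ∀ z : ℤ√D, (N : ℤ) ∣ z.norm - 1 →
      (N : ℤ√D) ∣ z ^ ((N : ℤ) - jacobiSym D N).toNat - 1)
    {q : ℕ} (hq : q.Prime) (hqN : q ∣ N) :
    (q : ℤ) - jacobiSym D q ∣ (N : ℤ) - jacobiSym D N := by
  have : Fact q.Prime := ⟨hq⟩
  obtain ⟨u, hu, hord⟩ := QuadraticAlgebra.exists_norm_eq_one_orderOf_eq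
    (hNodd.ne_two_of_dvd_nat hqN) (intCast_ne_zero_of_dvd_of_gcd_eq_one hq hqN hND)
  obtain ⟨M, hM⟩ := hqN
  obtain ⟨z, hzN, rfl⟩ :=
    exists_norm_sub_one_dvd_and_reduceMod_eq (Nat.squarefree_mul_iff.mp (hM ▸ hNsf)).1 hu
  have hzq := (Nat.cast_dvd_cast (Dvd.intro M hM.symm)).trans (h z (hM ▸ hzN))
  rw [natCast_dvd_sub_iff, map_pow, map_one] at hzq
  rw [← toNat_sub_jacobiSym_dvd_iff D hq.ne_zero hNodd.pos.ne',
    ← jacobiSym.legendreSym.to_jacobiSym, ← hord]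
  exact orderOf_dvd_of_pow_eq_one hzq

theorem carmichael_of_korselt (hNodd : Odd N) (hNsf : Squarefree N)
    (hND : Int.gcd (N : ℤ) D = 1)
    (h : ∀ q : ℕ, q.Prime → q ∣ N → (q : ℤ) - jacobiSym D q ∣ (N : ℤ) - jacobiSym D N)
    {z : ℤ√D} (hz : (N : ℤ) ∣ z.norm - 1) :
    (N : ℤ√D) ∣ z ^ ((N : ℤ) - jacobiSym D N).toNat - 1 := by
  refine hNsf.natCast_dvd_of_forall_prime_dvd fun q hq hqN => ?_
  have : Fact q.Prime := ⟨hq⟩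
  have hzq : QuadraticAlgebra.norm (reduceMod D q z) = 1 :=
    (intCast_dvd_norm_sub_one_iff q z).mp ((Int.natCast_dvd_natCast.mpr hqN).trans hz)
  have hq2 := hNodd.ne_two_of_dvd_nat hqN
  have hqD := intCast_ne_zero_of_dvd_of_gcd_eq_one hq hqN hND
  obtain ⟨c, hc⟩ := (toNat_sub_jacobiSym_dvd_iff D hq.ne_zero hNodd.pos.ne').mpr (h q hq hqN)
  rw [natCast_dvd_sub_iff, map_pow, map_one, hc, ← jacobiSym.legendreSym.to_jacobiSym, pow_mul,
    QuadraticAlgebra.pow_sub_legendreSym_eq_one hq2 hqD hzq, one_pow]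

end Zsqrtd

theorem stmt_9_general (D : ℤ)
    (N : ℕ) (hNodd : Odd N) (hNsf : Squarefree N)
    (hND : Int.gcd (N : ℤ) D = 1) :
    (∀ z : Zsqrtd D, (N : ℤ) ∣ (z.norm - 1) →
        (N : Zsqrtd D) ∣ (z ^ ((N : ℤ) - jacobiSym D N).toNat - 1)) ↔
      (∀ q : ℕ, q.Prime → q ∣ N →
        ((q : ℤ) - jacobiSym D q) ∣ ((N : ℤ) - jacobiSym D N)) :=
  ⟨fun h _ hq hqN => Zsqrtd.korselt_of_carmichael hNodd hNsf hND h hq hqN,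
    fun h _ hz => Zsqrtd.carmichael_of_korselt hNodd hNsf hND h hz⟩

/-- Theorem 7.5 (analogue of Korselt's criterion): an odd squarefree composite
`N` coprime to `D` is a `𝒢(D)`-Carmichael number iff `𝓕_D(q) ∣ 𝓕_D(N)` for every
prime `q ∣ N`, where `𝓕_D(n) = n − (D/n)` with `(D/n)` the Jacobi symbol. -/
theorem stmt_9 (D : ℤ) (hD : Squarefree D)
    (N : ℕ) (hN1 : 1 < N) (hNodd : Odd N) (hNsf : Squarefree N)
    (hNcomp : ¬ N.Prime) (hND : Int.gcd (N : ℤ) D = 1) :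
    (∀ z : Zsqrtd D, (N : ℤ) ∣ (z.norm - 1) →
        (N : Zsqrtd D) ∣ (z ^ ((N : ℤ) - jacobiSym D N).toNat - 1)) ↔
      (∀ q : ℕ, q.Prime → q ∣ N →
        ((q : ℤ) - jacobiSym D q) ∣ ((N : ℤ) - jacobiSym D N)) :=
  stmt_9_general D N hNodd hNsf hND
end

section
/- Let D be a negative squarefree integer and define c_D = 2|D| if D ≡ 1 (mod 4) and c_D = 4|D| if D ≡ 2, 3 (mod 4). Let p be an odd prime and k, ℓ positive integers with gcd(c_D·k, p) = 1, and set N = c_D·k·p^ℓ − 1. Then the Jacobi symbol satisfies (D/N) = −1. -/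
open ZMod

private lemma key_aux (m N : ℕ) (hm : Odd m) (hN : Odd N)
    (hmod : ((N : ℤ)) % (m : ℤ) = (-1 : ℤ) % (m : ℤ)) :
    jacobiSym (m : ℤ) N = (-1) ^ (m / 2 * (N / 2)) * (-1) ^ (m / 2) := by
  rw [jacobiSym.quadratic_reciprocity hm hN, jacobiSym.mod_left' hmod,
    jacobiSym.at_neg_one hm, χ₄_eq_neg_one_pow (Nat.odd_iff.mp hm)]

/-- For negative squarefree `D` and the specific choice of `c_D`, the Jacobi
symbol satisfies `(D/N) = −1` for `N = c_D·k·p^ℓ − 1`. -/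
theorem stmt_10 (D : ℤ) (hDneg : D < 0) (hD : Squarefree D)
    (cD : ℕ) (hcD : cD = if D % 4 = 1 then 2 * D.natAbs else 4 * D.natAbs)
    (p : ℕ) (hp : p.Prime) (hpodd : Odd p)
    (k ℓ : ℕ) (hk : 0 < k) (hℓ : 0 < ℓ)
    (hgcd : Nat.gcd (cD * k) p = 1)
    (N : ℕ) (hN : N = cD * k * p ^ ℓ - 1) :
    jacobiSym D N = -1 := by
  set m : ℕ := D.natAbs with hm
  have hDm : D = -(m : ℤ) := by rw [hm]; omega
  have hm1 : 1 ≤ m := by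
    have : D ≠ 0 := hDneg.ne
    omega
  have hppos : 0 < p ^ ℓ := pow_pos hp.pos ℓ
  -- D % 4 ≠ 0 by squarefreeness
  have h4 : D % 4 ≠ 0 := by
    intro h
    have h4d : (2 : ℤ) * 2 ∣ D := by omega
    exact (by decide : ¬ IsUnit (2 : ℤ)) (hD 2 h4d)
  have hcDor : cD = 2 * m ∨ cD = 4 * m := by
    rcases ite_eq_or_eq (D % 4 = 1) (2 * D.natAbs) (4 * D.natAbs) with h | h <;>
      rw [h] at hcD <;> omega
  have hN1 : N + 1 = cD * k * p ^ ℓ := by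
    have hcD2 : 2 ≤ cD := by omega
    have : cD * k * p ^ ℓ ≥ 2 * 1 * 1 :=
      Nat.mul_le_mul (Nat.mul_le_mul hcD2 hk) hppos
    omega
  have hmcD : m ∣ cD := by
    rcases hcDor with h | h
    · exact ⟨2, by omega⟩
    · exact ⟨4, by omega⟩
  have hmod : ∀ m' : ℕ, m' ∣ m → ((N : ℤ)) % (m' : ℤ) = (-1 : ℤ) % (m' : ℤ) := by
    intro m' hdm
    have hnd : m' ∣ N + 1 := by
      rw [hN1]
      exact ((hdm.trans hmcD).mul_right k).mul_right (p ^ ℓ)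
    have hdvd : (m' : ℤ) ∣ ((N : ℤ) + 1) := by
      have := Int.natCast_dvd_natCast.mpr hnd
      push_cast at this
      exact this
    have hME : (N : ℤ) ≡ -1 [ZMOD (m' : ℤ)] := by
      refine Int.modEq_iff_dvd.mpr ?_
      rw [show (-1 - (N : ℤ)) = -((N : ℤ) + 1) by ring]
      exact dvd_neg.mpr hdvd
    exact hME
  by_cases hD1 : D % 4 = 1
  · -- m % 4 = 3, cD = 2m
    rw [if_pos hD1] at hcD
    have hm4 : m % 4 = 3 := by omega
    have hN2 : N + 1 = 2 * (m * k * p ^ ℓ) := by rw [hN1, hcD]; ring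
    have hNodd : Odd N := by rw [Nat.odd_iff]; omega
    have hmodd : Odd m := by rw [Nat.odd_iff]; omega
    rw [hDm, jacobiSym.neg _ hNodd, key_aux m N hmodd hNodd (hmod m dvd_rfl),
      χ₄_eq_neg_one_pow (Nat.odd_iff.mp hNodd)]
    have hm2 : Odd (m / 2) := by rw [Nat.odd_iff]; omega
    rw [pow_mul, hm2.neg_one_pow, ← mul_assoc, ← pow_add, ← two_mul, pow_mul]
    norm_num
  · rw [if_neg hD1] at hcD
    have hN2 : N + 1 = 4 * (m * k * p ^ ℓ) := by rw [hN1, hcD]; ring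
    have hN4 : N % 4 = 3 := by omega
    have hNodd : Odd N := by rw [Nat.odd_iff]; omega
    by_cases hDodd : D % 2 = 1
    · -- D % 4 = 3, so m % 4 = 1
      have hm4 : m % 4 = 1 := by omega
      rw [hDm, jacobiSym.neg _ hNodd, χ₄_nat_three_mod_four hN4,
        jacobiSym.quadratic_reciprocity_one_mod_four hm4 hNodd,
        jacobiSym.mod_left' (hmod m dvd_rfl), jacobiSym.at_neg_one (by rw [Nat.odd_iff]; omega),
        χ₄_nat_one_mod_four hm4]
      ring
    · -- D % 4 = 2, m = 2 * m' with m' odd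
      have hm2 : m % 4 = 2 := by omega
      obtain ⟨m', hm'⟩ : 2 ∣ m := by omega
      have hm'odd : Odd m' := by rw [Nat.odd_iff]; omega
      have hN8 : N % 8 = 7 := by
        have : N + 1 = 8 * (m' * k * p ^ ℓ) := by rw [hN2, hm']; ring
        omega
      have hsplit : ((m : ℤ)) = 2 * (m' : ℤ) := by push_cast [hm']; ring
      rw [hDm, jacobiSym.neg _ hNodd, χ₄_nat_three_mod_four hN4, hsplit,
        jacobiSym.mul_left, jacobiSym.at_two hNodd, χ₈_nat_eq_if_mod_eight, hN8,
        key_aux m' N hm'odd hNodd (hmod m' ⟨2, by omega⟩)]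
      have hN2odd : Odd (N / 2) := by rw [Nat.odd_iff]; omega
      rw [mul_comm (m' / 2) (N / 2), pow_mul, hN2odd.neg_one_pow, ← pow_add, ← two_mul,
        pow_mul, if_neg (by omega : ¬ N % 2 = 0)]
      norm_num
end

section
/- Let p be an odd prime and k, ℓ positive integers with p ∤ k, and set N = 2·k·p^ℓ − 1. Let Q be a prime such that the Jacobi symbol (Q/N) = −1, and let w ∈ ℤ[√Q] satisfy N(w) ≡ 1 (mod N). Suppose there exists an integer j with 1 ≤ j ≤ ℓ such that (i) Φ_p(w^{2k·p^{j−1}}) ≡ 0 (mod N) and (ii) 2k·p^ℓ ≤ p^{2j} (equivalently, 2j ≥ log_p(2k) + ℓ). Then N is prime. -/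
open Polynomial in

lemma aux_field (r : ℕ) (hr : r.Prime) (hrodd : Odd r)
    (F : Type) [Field F] [Fintype F] [CharP F r] (hcard : Fintype.card F = r ^ 2)
    (Q : ℕ) (hrQ : ¬ r ∣ Q)
    (p : ℕ) (hp : p.Prime) (hrp : r ≠ p)
    (k j : ℕ) (hj1 : 1 ≤ j)
    (w : Zsqrtd (Q : ℤ)) (N : ℕ) (hrN : r ∣ N)
    (hnorm : (N : ℤ) ∣ w.norm - 1)
    (hΦ : (N : Zsqrtd (Q : ℤ)) ∣
      (Polynomial.aeval (w ^ (2 * k * p ^ (j - 1))) (Polynomial.cyclotomic p ℤ))) :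
    p ^ j ∣ r - 1 ∨ p ^ j ∣ r + 1 := by
  haveI : Fact r.Prime := ⟨hr⟩
  haveI : Fact p.Prime := ⟨hp⟩
  have hrmod : r % 2 = 1 := Nat.odd_iff.mp hrodd
  have hr3 : 3 ≤ r := by
    have := hr.two_le
    omega
  have hchar : ringChar F = r := by
    rw [ringChar.eq_iff]; infer_instance
  set ψ : ZMod r →+* F := ZMod.castHom dvd_rfl F with hψ
  -- Q is nonzero in ZMod r
  have hQ0 : (Q : ZMod r) ≠ 0 := by
    simpa [ZMod.natCast_eq_zero_iff] using hrQ
  -- ε = Q^((r-1)/2) in ZMod r satisfies ε * ε = 1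
  set ε : ZMod r := (Q : ZMod r) ^ (r / 2) with hε
  have hε2 : ε * ε = 1 := by
    rw [hε, ← pow_add]
    have h2 : r / 2 + r / 2 = r - 1 := by omega
    rw [h2]
    exact ZMod.pow_card_sub_one_eq_one hQ0
  -- Q is a square in F
  have hQF : ψ ((Q : ZMod r)) = (Q : F) := map_natCast ψ Q
  have hQF0 : (Q : F) ≠ 0 := by
    rw [← hQF]
    exact fun h => hQ0 (ψ.injective (h.trans (map_zero _).symm))
  have hsq : IsSquare (Q : F) := by
    rw [FiniteField.isSquare_iff (by rw [hchar]; omega) hQF0, hcard]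
    have h9 : r ^ 2 = 2 * ((r / 2) * (r + 1)) + 1 := by
      have hq : r = 2 * (r / 2) + 1 := by omega
      calc r ^ 2 = (2 * (r / 2) + 1) ^ 2 := by rw [← hq]
        _ = 2 * ((r / 2) * ((2 * (r / 2) + 1) + 1)) + 1 := by ring
        _ = 2 * ((r / 2) * (r + 1)) + 1 := by rw [← hq]
    have hexp : r ^ 2 / 2 = (r / 2) * (r + 1) := by omega
    rw [hexp, pow_mul, ← hQF, ← map_pow, ← hε, ← map_pow, ← map_one ψ]
    congr 1
    have h21 : r + 1 = 2 * ((r + 1) / 2) := by omega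
    rw [h21, pow_mul, pow_two, hε2, one_pow]
  obtain ⟨s, hs⟩ := hsq
  have hss : s * s = ((Q : ℤ) : F) := by rw [← hs]; push_cast; ring
  -- the lift
  set φ : Zsqrtd (Q : ℤ) →+* F := Zsqrtd.lift ⟨s, hss⟩ with hφ
  have hNF : (N : F) = 0 := (CharP.cast_eq_zero_iff F r N).mpr hrN
  have hφN : φ (N : Zsqrtd (Q : ℤ)) = 0 := by rw [map_natCast]; exact hNF
  set u : F := φ w with hu
  have huv : u * φ (star w) = 1 := by
    rw [hu, ← map_mul, ← Zsqrtd.norm_eq_mul_conj, map_intCast]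
    obtain ⟨c, hc⟩ := hnorm
    have hwn : w.norm = 1 + (N : ℤ) * c := by linarith
    rw [hwn]
    push_cast [hNF]
    ring
  have hu0 : u ≠ 0 := fun h => by simp [h] at huv
  -- the cyclotomic condition transfers
  have hΦF : eval (u ^ (2 * k * p ^ (j - 1))) (cyclotomic p F) = 0 := by
    obtain ⟨t, ht⟩ := hΦ
    have h2 := congrArg φ ht
    rw [map_mul, hφN, zero_mul] at h2
    have hcomp : φ.comp (algebraMap ℤ (Zsqrtd (Q : ℤ))) = Int.castRingHom F :=
      RingHom.ext_int _ _
    rw [← map_cyclotomic_int p F, eval_map, ← h2, aeval_def, Polynomial.hom_eval₂, hcomp,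
      map_pow]
  set u' : F := u ^ (2 * k * p ^ (j - 1)) with hu'
  have hu'p : u' ^ p = 1 := by
    obtain ⟨g, hg⟩ := Polynomial.cyclotomic.dvd_X_pow_sub_one p F
    have h3 := congrArg (eval u') hg
    rw [eval_mul, hΦF, zero_mul, eval_sub, eval_pow, eval_X, eval_one] at h3
    linear_combination h3
  have hu'1 : u' ≠ 1 := by
    intro h
    rw [h, Polynomial.eval_one_cyclotomic_prime] at hΦF
    have : r ∣ p := (CharP.cast_eq_zero_iff F r p).mp hΦF
    exact hrp ((Nat.prime_dvd_prime_iff_eq hr hp).mp this)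
  -- order computations
  set t : F := u ^ (2 * k) with htdef
  have htu' : u' = t ^ (p ^ (j - 1)) := by rw [hu', htdef, ← pow_mul]
  have htpj : t ^ (p ^ j) = 1 := by
    have hj' : p ^ j = p ^ (j - 1) * p := by
      rw [← pow_succ]
      congr 1
      omega
    rw [hj', pow_mul, ← htu', hu'p]
  have hordt : orderOf t = p ^ j := by
    have hdvd : orderOf t ∣ p ^ j := orderOf_dvd_of_pow_eq_one htpj
    obtain ⟨i, hij, hi⟩ := (Nat.dvd_prime_pow hp).mp hdvd
    have hij' : i = j := by
      by_contra hne
      have h4 : i ≤ j - 1 := by omega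
      have h5 : orderOf t ∣ p ^ (j - 1) := hi ▸ pow_dvd_pow p h4
      have h6 : t ^ (p ^ (j - 1)) = 1 := orderOf_dvd_iff_pow_eq_one.mp h5
      exact hu'1 (htu' ▸ h6)
    rw [hi, hij']
  have hpord : p ^ j ∣ orderOf u := by
    rw [← hordt, htdef]
    exact orderOf_pow_dvd _
  -- Frobenius computation
  have hsr : s ^ r = ψ ε * s := by
    have hrodd' : r = 2 * (r / 2) + 1 := by omega
    calc s ^ r = (s * s) ^ (r / 2) * s := by
          rw [← pow_two, ← pow_mul, ← pow_succ, ← hrodd']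
      _ = ψ ε * s := by
          rw [hss, hε, map_pow, hQF]
          push_cast
          ring
  have hcast : ∀ a : ℤ, (a : F) ^ r = (a : F) := by
    intro a
    rw [← map_intCast ψ a, ← map_pow, ZMod.pow_card]
  have hulift : u = ((w.re : F)) + ((w.im : F)) * s := by
    rw [hu, hφ, Zsqrtd.lift_apply_apply]
  have hstar : φ (star w) = ((w.re : F)) - ((w.im : F)) * s := by
    rw [hφ, Zsqrtd.lift_apply_apply, Zsqrtd.re_star, Zsqrtd.im_star]
    push_cast
    ring
  have hur : u ^ r = ((w.re : F)) + ((w.im : F)) * (ψ ε * s) := by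
    rw [hulift, add_pow_char, mul_pow, hcast, hcast, hsr]
  -- case split
  rcases mul_self_eq_one_iff.mp hε2 with h1 | h1
  · -- ε = 1 : split case, u^r = u
    left
    have hur1 : u ^ r = u := by
      rw [hur, h1, map_one, hulift]
      ring
    have hcan : u ^ (r - 1) * u = 1 * u := by
      rw [← pow_succ, one_mul]
      have hr1 : r - 1 + 1 = r := by omega
      rw [hr1, hur1]
    have h8 : u ^ (r - 1) = 1 := mul_right_cancel₀ hu0 hcan
    exact dvd_trans hpord (orderOf_dvd_of_pow_eq_one h8)
  · -- ε = -1 : inert case, u^(r+1) = 1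
    right
    have hur1 : u ^ r = φ (star w) := by
      rw [hur, h1, map_neg, map_one, hstar]
      ring
    have h8 : u ^ (r + 1) = 1 := by
      rw [pow_succ, hur1, mul_comm]
      exact huv
    exact dvd_trans hpord (orderOf_dvd_of_pow_eq_one h8)


/-- Theorem 9.2: Lucasian certificate for `N = 2·k·p^ℓ − 1` over `ℤ[√Q]` for a
prime `Q` with `(Q/N) = −1`. -/
theorem stmt_13 (p : ℕ) (hp : p.Prime) (hpodd : Odd p)
    (k ℓ : ℕ) (hk : 0 < k) (hℓ : 0 < ℓ) (hpk : ¬ p ∣ k)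
    (N : ℕ) (hN : N = 2 * k * p ^ ℓ - 1)
    (Q : ℕ) (hQ : Q.Prime) (hJ : jacobiSym (Q : ℤ) N = -1)
    (w : Zsqrtd (Q : ℤ))
    (hnorm : (N : ℤ) ∣ (w.norm - 1))
    (hj : ∃ j : ℕ, 1 ≤ j ∧ j ≤ ℓ ∧
      (N : Zsqrtd (Q : ℤ)) ∣
        (Polynomial.aeval (w ^ (2 * k * p ^ (j - 1))) (Polynomial.cyclotomic p ℤ)) ∧
      2 * k * p ^ ℓ ≤ p ^ (2 * j)) :
    N.Prime := by
  obtain ⟨j, hj1, hjℓ, hΦ, hsize⟩ := hj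
  have keyj : ∀ r : ℕ, r.Prime → Odd r → ¬ r ∣ Q → r ≠ p → r ∣ N →
      (p ^ j ∣ r - 1 ∨ p ^ j ∣ r + 1) := by
    intro r hr hro hrQ hrp hrN
    haveI : Fact r.Prime := ⟨hr⟩
    haveI : Fintype (GaloisField r 2) := Fintype.ofFinite _
    exact aux_field r hr hro (GaloisField r 2)
      (by rw [← Nat.card_eq_fintype_card]; exact GaloisField.card r 2 (by norm_num))
      Q hrQ p hp hrp k j hj1 w N hrN hnorm hΦ
  have hp3 : 3 ≤ p := by
    have := hp.two_le
    have := Nat.odd_iff.mp hpodd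
    omega
  have hple : 3 ≤ p ^ ℓ := by
    calc 3 ≤ p := hp3
    _ = p ^ 1 := (pow_one p).symm
    _ ≤ p ^ ℓ := Nat.pow_le_pow_right (by omega) hℓ
  have h6 : 2 * 3 ≤ 2 * k * p ^ ℓ := by
    calc 2 * 3 ≤ (2 * k) * 3 := by omega
    _ ≤ 2 * k * p ^ ℓ := Nat.mul_le_mul_left _ hple
  have hN1 : N + 1 = 2 * k * p ^ ℓ := by omega
  have h2d : 2 ∣ N + 1 := ⟨k * p ^ ℓ, by rw [hN1]; ring⟩
  have hNodd : N % 2 = 1 := by omega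
  have hpdN1 : p ∣ N + 1 := by
    rw [hN1]
    exact Dvd.dvd.mul_left (dvd_pow_self p (by omega)) (2 * k)
  have hpN : ¬ p ∣ N := by
    intro h
    have h1 : p ∣ 1 := by
      have := Nat.dvd_sub hpdN1 h
      simpa using this
    have := Nat.le_of_dvd one_pos h1
    omega
  by_contra hNP
  set r := N.minFac with hrdef
  have hr : r.Prime := Nat.minFac_prime (by omega)
  have hrN : r ∣ N := Nat.minFac_dvd N
  have hr2N : r ^ 2 ≤ N := Nat.minFac_sq_le_self (by omega) hNP
  have hrne2 : r ≠ 2 := by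
    intro h
    have : 2 ∣ N := h ▸ hrN
    omega
  have hrodd : Odd r := hr.odd_of_ne_two hrne2
  have hrQ : ¬ r ∣ Q := by
    intro hdvd
    haveI : NeZero N := ⟨by omega⟩
    have hgcd : Int.gcd (Q : ℤ) (N : ℤ) = 1 := by
      by_contra h
      have := jacobiSym.eq_zero_iff_not_coprime.mpr h
      rw [hJ] at this
      norm_num at this
    have : r ∣ Nat.gcd Q N := Nat.dvd_gcd hdvd hrN
    rw [Int.gcd_natCast_natCast] at hgcd
    rw [hgcd] at this
    have := Nat.le_of_dvd one_pos this
    have := hr.two_le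
    omega
  have hrp : r ≠ p := fun h => hpN (h ▸ hrN)
  have hkey := keyj r hr hrodd hrQ hrp hrN
  -- final size contradiction
  have hpj3 : 3 ≤ p ^ j := by
    calc 3 ≤ p := hp3
    _ = p ^ 1 := (pow_one p).symm
    _ ≤ p ^ j := Nat.pow_le_pow_right (by omega) hj1
  have hpjodd : Odd (p ^ j) := hpodd.pow
  have hNle : N + 1 ≤ (p ^ j) ^ 2 := by
    rw [← pow_mul, mul_comm]
    omega
  have hr3 : 3 ≤ r := by
    have := hr.two_le
    have := Nat.odd_iff.mp hrodd
    omega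
  have hrlb : 2 * p ^ j ≤ r + 1 := by
    rcases hkey with ⟨m, hm⟩ | ⟨m, hm⟩
    · -- r - 1 = p^j * m
      have hEm : Even m := by
        have h1 : Even (r - 1) := by
          rcases hrodd with ⟨c, hc⟩
          exact ⟨c, by omega⟩
        rw [hm] at h1
        rcases (Nat.even_mul.mp h1) with h | h
        · exact absurd h (by simpa [Nat.even_iff, Nat.odd_iff.mp hpjodd] )
        · exact h
      have hm0 : m ≠ 0 := by
        intro h
        rw [h, mul_zero] at hm
        omega
      have hm2 : 2 ≤ m := by
        rcases hEm with ⟨c, hc⟩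
        omega
      have : p ^ j * 2 ≤ p ^ j * m := Nat.mul_le_mul_left _ hm2
      omega
    · -- r + 1 = p^j * m
      have hEm : Even m := by
        have h1 : Even (r + 1) := by
          rcases hrodd with ⟨c, hc⟩
          exact ⟨c + 1, by omega⟩
        rw [hm] at h1
        rcases (Nat.even_mul.mp h1) with h | h
        · exact absurd h (by simpa [Nat.even_iff, Nat.odd_iff.mp hpjodd] )
        · exact h
      have hm0 : m ≠ 0 := by
        intro h
        rw [h, mul_zero] at hm
        omega
      have hm2 : 2 ≤ m := by
        rcases hEm with ⟨c, hc⟩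
        omega
      have : p ^ j * 2 ≤ p ^ j * m := Nat.mul_le_mul_left _ hm2
      omega
  -- now r^2 ≤ N ≤ (p^j)^2 - 1 but r ≥ 2 p^j - 1
  set x := p ^ j with hx
  have h1 : (2 * x) ^ 2 ≤ (r + 1) ^ 2 := Nat.pow_le_pow_left hrlb 2
  have hrr : r ≤ r ^ 2 := by nlinarith [hr3]
  nlinarith [hr2N, hNle, hpj3, h1, hrr]
end
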